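/- arXiv:1905.08029 — 4 statements merged into one kernel-verified Lean document; each statement's English description precedes it below -/
import Mathlib

section
/- For all g, h ∈ G_rel, flux_ℝ(g ∘ h) = flux_ℝ(g) + flux_ℝ(h); that is, the flux homomorphism flux_ℝ : G_rel → ℝ is a group homomorphism. -/
open MeasureTheory

noncomputable section

/-- The closed unit disk in `ℝ²`. -/
def Disk : Set (ℝ × ℝ) := {p | p.1 ^ 2 + p.2 ^ 2 ≤ 1}

/-- The boundary circle `∂D` of the unit disk. -/
def Bdry : Set (ℝ × ℝ) := {p | p.1 ^ 2 + p.2 ^ 2 = 1}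

/-- A symplectomorphism of the closed unit disk `D`: a bijection of `D` which, together
with its inverse, extends to a `C^∞` map on an open neighborhood of `D`, and whose
Jacobian determinant equals `1` at every point of `D`. -/
structure SympD where
  toFun : ℝ × ℝ → ℝ × ℝ
  invFun : ℝ × ℝ → ℝ × ℝ
  mapsTo : Set.MapsTo toFun Disk Disk
  invMapsTo : Set.MapsTo invFun Disk Disk
  leftInv : ∀ p ∈ Disk, invFun (toFun p) = p
  rightInv : ∀ p ∈ Disk, toFun (invFun p) = p
  smooth : ∃ U : Set (ℝ × ℝ), IsOpen U ∧ Disk ⊆ U ∧ ContDiffOn ℝ (⊤ : ℕ∞) toFun U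
  invSmooth : ∃ U : Set (ℝ × ℝ), IsOpen U ∧ Disk ⊆ U ∧ ContDiffOn ℝ (⊤ : ℕ∞) invFun U
  areaPreserving : ∀ p ∈ Disk,
    (fderiv ℝ toFun p (1, 0)).1 * (fderiv ℝ toFun p (0, 1)).2
      - (fderiv ℝ toFun p (0, 1)).1 * (fderiv ℝ toFun p (1, 0)).2 = 1

/-- `g ∈ H_rel`: the restriction of `g` to the boundary circle is the identity. -/
def IsRel (g : SympD) : Prop := ∀ p ∈ Bdry, g.toFun p = p

/-- `g ∈ G`: `g` fixes the origin. -/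
def FixesOrigin (g : SympD) : Prop := g.toFun (0, 0) = (0, 0)

/-- `g ∈ G_rel = G ∩ H_rel`. -/
def IsGrel (g : SympD) : Prop := FixesOrigin g ∧ IsRel g

/-- `gh` coincides on `D` with the composite `g ∘ h`. -/
def IsComp (g h gh : SympD) : Prop := ∀ p ∈ Disk, gh.toFun p = g.toFun (h.toFun p)

/-- The 1-cochain `τ(g) = ∫_γ (g*η − η) = ∫₀¹ ½(g₁ ∂₁g₂ − g₂ ∂₁g₁)(t,0) dt`,
where `γ(t) = (t,0)` and `η = (x dy − y dx)/2` vanishes along `γ`. -/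
def tau (g : SympD) : ℝ :=
  ∫ t in (0:ℝ)..1, (1 / 2) *
    ((g.toFun (t, 0)).1 * (fderiv ℝ g.toFun (t, 0) (1, 0)).2
      - (g.toFun (t, 0)).2 * (fderiv ℝ g.toFun (t, 0) (1, 0)).1)

/-- `φ : ℝ → ℝ` is a lift of the boundary restriction `g|_{∂D}`. -/
def IsLift (g : SympD) (φ : ℝ → ℝ) : Prop :=
  ContDiff ℝ (⊤ : ℕ∞) φ ∧ (∀ θ : ℝ, φ (θ + 2 * Real.pi) = φ θ + 2 * Real.pi) ∧
    ∀ θ : ℝ, g.toFun (Real.cos θ, Real.sin θ) = (Real.cos (φ θ), Real.sin (φ θ))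

/-- `F` is the primitive `F_g` of the closed 1-form `g*η − η` on `D`, normalized by
`F(x₀) = 0` at `x₀ = (1,0)`: it is `C^∞` on a neighborhood of `D` and satisfies
`dF = g*η − η` at every point of `D`. -/
def IsPrimitive (g : SympD) (F : ℝ × ℝ → ℝ) : Prop :=
  (∃ U : Set (ℝ × ℝ), IsOpen U ∧ Disk ⊆ U ∧ ContDiffOn ℝ (⊤ : ℕ∞) F U) ∧
  (∀ p ∈ Disk, ∀ v : ℝ × ℝ,
    fderiv ℝ F p v =
      (1 / 2) * ((g.toFun p).1 * (fderiv ℝ g.toFun p v).2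
        - (g.toFun p).2 * (fderiv ℝ g.toFun p v).1)
      - (1 / 2) * (p.1 * v.2 - p.2 * v.1)) ∧
  F (1, 0) = 0

/-- `κ(g) = −∫_{∂D} F_g η = −½ ∫₀^{2π} F_g(cos θ, sin θ) dθ`, expressed in terms of a
chosen primitive `F = F_g`. -/
def kappaOf (F : ℝ × ℝ → ℝ) : ℝ :=
  -(1 / 2) * ∫ θ in (0:ℝ)..(2 * Real.pi), F (Real.cos θ, Real.sin θ)

/-- The 1-cochain `τ₀(g) = ∫_D g*η ∧ η
 = ∬_D ¼[(g₁ ∂ₓg₂ − g₂ ∂ₓg₁)x + (g₁ ∂_yg₂ − g₂ ∂_yg₁)y] dx dy`. -/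
def tau0 (g : SympD) : ℝ :=
  ∫ p in Disk, (1 / 4) *
    (((g.toFun p).1 * (fderiv ℝ g.toFun p (1, 0)).2
        - (g.toFun p).2 * (fderiv ℝ g.toFun p (1, 0)).1) * p.1
      + ((g.toFun p).1 * (fderiv ℝ g.toFun p (0, 1)).2
        - (g.toFun p).2 * (fderiv ℝ g.toFun p (0, 1)).1) * p.2)

namespace FluxAux

open scoped Topology

abbrev E2 := ℝ × ℝ

def Pf (w : E2 → E2) (v : E2) (q : E2) : ℝ :=
  (w q).1 * (fderiv ℝ w q v).2 - (w q).2 * (fderiv ℝ w q v).1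

lemma clm_eval (L : E2 →L[ℝ] E2) (v : E2) :
    L v = v.1 • L (1,0) + v.2 • L (0,1) := by
  have hv : v = v.1 • ((1:ℝ),(0:ℝ)) + v.2 • ((0:ℝ),(1:ℝ)) := by
    simp [Prod.ext_iff]
  rw [show L v = L (v.1 • ((1:ℝ),(0:ℝ)) + v.2 • ((0:ℝ),(1:ℝ))) from by rw [← hv]]
  rw [map_add, _root_.map_smul, _root_.map_smul]

lemma cross_comp (M : E2 →L[ℝ] E2) (a b : E2) :
    (M a).1 * (M b).2 - (M a).2 * (M b).1
      = ((M (1,0)).1 * (M (0,1)).2 - (M (0,1)).1 * (M (1,0)).2)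
        * (a.1 * b.2 - a.2 * b.1) := by
  rw [clm_eval M a, clm_eval M b]
  simp only [Prod.fst_add, Prod.snd_add, Prod.smul_fst, Prod.smul_snd, smul_eq_mul]
  ring

variable {W : Set E2} {w : E2 → E2} {q : E2}

lemma hasFDerivAt_dirderiv (hW : IsOpen W) (hw : ContDiffOn ℝ (⊤:ℕ∞) w W) (hq : q ∈ W) (v : E2) :
    HasFDerivAt (fun p => fderiv ℝ w p v)
      ((ContinuousLinearMap.apply ℝ E2 v).comp (fderiv ℝ (fderiv ℝ w) q)) q := by
  have hat : ContDiffAt ℝ (⊤:ℕ∞) w q := (hw q hq).contDiffAt (hW.mem_nhds hq)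
  have hd1 : ContDiffAt ℝ 1 (fderiv ℝ w) q :=
    hat.fderiv_right (by exact WithTop.coe_le_coe.2 le_top)
  have hD : DifferentiableAt ℝ (fderiv ℝ w) q := hd1.differentiableAt one_ne_zero
  exact (ContinuousLinearMap.apply ℝ E2 v).hasFDerivAt.comp q hD.hasFDerivAt

lemma sym2 (hW : IsOpen W) (hw : ContDiffOn ℝ (⊤:ℕ∞) w W) (hq : q ∈ W) (u v : E2) :
    fderiv ℝ (fun p => fderiv ℝ w p v) q u = fderiv ℝ (fun p => fderiv ℝ w p u) q v := by
  have hat : ContDiffAt ℝ (⊤:ℕ∞) w q := (hw q hq).contDiffAt (hW.mem_nhds hq)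
  have hsym : IsSymmSndFDerivAt ℝ w q :=
    hat.isSymmSndFDerivAt (by rw [minSmoothness_of_isRCLikeNormedField]; exact WithTop.coe_le_coe.2 le_top)
  rw [(hasFDerivAt_dirderiv hW hw hq v).fderiv, (hasFDerivAt_dirderiv hW hw hq u).fderiv]
  simpa using hsym u v

lemma fderiv_Pf (hW : IsOpen W) (hw : ContDiffOn ℝ (⊤:ℕ∞) w W) (hq : q ∈ W) (u v : E2) :
    fderiv ℝ (Pf w v) q u =
      (fderiv ℝ w q u).1 * (fderiv ℝ w q v).2
        + (w q).1 * (fderiv ℝ (fun p => fderiv ℝ w p v) q u).2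
        - ((fderiv ℝ w q u).2 * (fderiv ℝ w q v).1
        + (w q).2 * (fderiv ℝ (fun p => fderiv ℝ w p v) q u).1) := by
  have hat : ContDiffAt ℝ (⊤:ℕ∞) w q := (hw q hq).contDiffAt (hW.mem_nhds hq)
  have hwd : HasFDerivAt w (fderiv ℝ w q) q :=
    (hat.differentiableAt (by simp)).hasFDerivAt
  have hXd := hasFDerivAt_dirderiv hW hw hq v
  set DX := (ContinuousLinearMap.apply ℝ E2 v).comp (fderiv ℝ (fderiv ℝ w) q) with hDX
  have ha1 : HasFDerivAt (fun p => (w p).1)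
      ((ContinuousLinearMap.fst ℝ ℝ ℝ).comp (fderiv ℝ w q)) q :=
    (ContinuousLinearMap.fst ℝ ℝ ℝ).hasFDerivAt.comp q hwd
  have ha2 : HasFDerivAt (fun p => (w p).2)
      ((ContinuousLinearMap.snd ℝ ℝ ℝ).comp (fderiv ℝ w q)) q :=
    (ContinuousLinearMap.snd ℝ ℝ ℝ).hasFDerivAt.comp q hwd
  have hb2 : HasFDerivAt (fun p => (fderiv ℝ w p v).2)
      ((ContinuousLinearMap.snd ℝ ℝ ℝ).comp DX) q :=
    (ContinuousLinearMap.snd ℝ ℝ ℝ).hasFDerivAt.comp q hXd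
  have hb1 : HasFDerivAt (fun p => (fderiv ℝ w p v).1)
      ((ContinuousLinearMap.fst ℝ ℝ ℝ).comp DX) q :=
    (ContinuousLinearMap.fst ℝ ℝ ℝ).hasFDerivAt.comp q hXd
  have hP : HasFDerivAt (Pf w v) _ q := (ha1.mul hb2).sub (ha2.mul hb1)
  rw [hP.fderiv]
  have hfd : fderiv ℝ (fun p => fderiv ℝ w p v) q = DX := hXd.fderiv
  simp [hfd, ContinuousLinearMap.comp_apply]
  ring

lemma key_identity (hW : IsOpen W) (hw : ContDiffOn ℝ (⊤:ℕ∞) w W) (hq : q ∈ W) :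
    fderiv ℝ (Pf w (0,1)) q (1,0) - fderiv ℝ (Pf w (1,0)) q (0,1)
      = 2 * ((fderiv ℝ w q (1,0)).1 * (fderiv ℝ w q (0,1)).2
           - (fderiv ℝ w q (1,0)).2 * (fderiv ℝ w q (0,1)).1) := by
  rw [fderiv_Pf hW hw hq (1,0) (0,1), fderiv_Pf hW hw hq (0,1) (1,0),
    sym2 hW hw hq (1,0) (0,1)]
  ring

lemma contDiffOn_Pf (hW : IsOpen W) (hw : ContDiffOn ℝ (⊤:ℕ∞) w W) (v : E2) :
    ContDiffOn ℝ (⊤:ℕ∞) (Pf w v) W := by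
  have h1 : ContDiffOn ℝ (⊤:ℕ∞) (fderiv ℝ w) W :=
    hw.fderiv_of_isOpen hW (by exact WithTop.coe_le_coe.2 le_top)
  have h2 : ContDiffOn ℝ (⊤:ℕ∞) (fun q => fderiv ℝ w q v) W :=
    h1.clm_apply contDiffOn_const
  have hw1 : ContDiffOn ℝ (⊤:ℕ∞) (fun q => (w q).1) W := contDiff_fst.comp_contDiffOn hw
  have hw2 : ContDiffOn ℝ (⊤:ℕ∞) (fun q => (w q).2) W := contDiff_snd.comp_contDiffOn hw
  have h21 : ContDiffOn ℝ (⊤:ℕ∞) (fun q => (fderiv ℝ w q v).1) W :=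
    contDiff_fst.comp_contDiffOn h2
  have h22 : ContDiffOn ℝ (⊤:ℕ∞) (fun q => (fderiv ℝ w q v).2) W :=
    contDiff_snd.comp_contDiffOn h2
  exact (hw1.mul h22).sub (hw2.mul h21)

lemma disk_comb' {a b : E2} (ha : a ∈ Disk) (hb : b ∈ Disk) {s : ℝ}
    (h0 : 0 ≤ s) (h1 : s ≤ 1) : ((1-s) • a + s • b : E2) ∈ Disk := by
  simp only [Disk, Set.mem_setOf_eq] at *
  simp only [Prod.fst_add, Prod.snd_add, Prod.smul_fst, Prod.smul_snd, smul_eq_mul]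
  nlinarith [mul_nonneg (mul_nonneg (sub_nonneg.2 h1) h0) (sq_nonneg (a.1 - b.1)),
    mul_nonneg (mul_nonneg (sub_nonneg.2 h1) h0) (sq_nonneg (a.2 - b.2))]

lemma square_swap {φ : E2 → ℝ} (hφ : ContinuousOn φ (Set.Icc 0 1 ×ˢ Set.Icc 0 1)) :
    ∫ t in (0:ℝ)..1, ∫ s in (0:ℝ)..1, φ (s,t) = ∫ s in (0:ℝ)..1, ∫ t in (0:ℝ)..1, φ (s,t) := by
  have h01 : (0:ℝ) ≤ 1 := zero_le_one
  have hint : IntegrableOn (fun p : ℝ × ℝ => φ (p.2, p.1))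
      (Set.Icc 0 1 ×ˢ Set.Icc 0 1) (volume.prod volume) := by
    rw [← Measure.volume_eq_prod]
    apply ContinuousOn.integrableOn_compact (isCompact_Icc.prod isCompact_Icc)
    exact hφ.comp (continuous_swap.continuousOn) (fun p hp => ⟨hp.2, hp.1⟩)
  have hint2 : Integrable (Function.uncurry fun t s => φ (s, t))
      ((volume.restrict (Set.Ioc (0:ℝ) 1)).prod (volume.restrict (Set.Ioc (0:ℝ) 1))) := by
    rw [MeasureTheory.Measure.prod_restrict]
    exact (hint.mono_set (Set.prod_mono Set.Ioc_subset_Icc_self Set.Ioc_subset_Icc_self))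
  calc ∫ t in (0:ℝ)..1, ∫ s in (0:ℝ)..1, φ (s,t)
      = ∫ t in Set.Ioc (0:ℝ) 1, ∫ s in Set.Ioc (0:ℝ) 1, φ (s,t) := by
        rw [intervalIntegral.integral_of_le h01]
        congr 1; ext t; rw [intervalIntegral.integral_of_le h01]
    _ = ∫ s in Set.Ioc (0:ℝ) 1, ∫ t in Set.Ioc (0:ℝ) 1, φ (s,t) :=
        MeasureTheory.integral_integral_swap hint2
    _ = ∫ s in (0:ℝ)..1, ∫ t in (0:ℝ)..1, φ (s,t) := by
        rw [intervalIntegral.integral_of_le h01]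
        congr 1; ext s; rw [intervalIntegral.integral_of_le h01]

end FluxAux

open FluxAux

/-- the flux homomorphism `flux_ℝ : G_rel → ℝ` (the restriction of `τ`
to `G_rel`) is a group homomorphism: `flux_ℝ(g ∘ h) = flux_ℝ(g) + flux_ℝ(h)`. -/
theorem flux_hom (g h gh : SympD) (hg : IsGrel g) (hh : IsGrel h) (hgh : IsGrel gh)
    (hcomp : IsComp g h gh) :
    tau gh = tau g + tau h := by
  classical
  obtain ⟨hg0, hgB⟩ := hg
  obtain ⟨hh0, hhB⟩ := hh
  obtain ⟨Ug, hUgo, hUgs, hgsm⟩ := g.smooth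
  obtain ⟨Uh, hUho, hUhs, hhsm⟩ := h.smooth
  obtain ⟨Uk, hUko, hUks, hksm⟩ := gh.smooth
  -- basic membership facts
  have hdisk : ∀ t : ℝ, t ∈ Set.Icc (0:ℝ) 1 → ((t,(0:ℝ)) : E2) ∈ Disk := by
    intro t ht
    simp only [Disk, Set.mem_setOf_eq]
    nlinarith [ht.1, ht.2]
  -- the curve and the straight-line homotopy
  set c : ℝ → E2 := fun t => h.toFun (t, 0) with hc_def
  set d : ℝ → E2 := fun t => c t - (t, 0) with hd_def
  set c' : ℝ → E2 := fun t => fderiv ℝ h.toFun (t,0) (1,0) with hc'_def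
  set d' : ℝ → E2 := fun t => c' t - ((1:ℝ),(0:ℝ)) with hd'_def
  set HH : E2 → E2 := fun q => q.2 • ((1:ℝ),(0:ℝ)) + q.1 • d q.2 with hHH_def
  set uu : E2 → E2 := fun q => g.toFun (HH q) with huu_def
  set W0 : Set E2 := {q : E2 | ((q.2, 0) : E2) ∈ Uh} with hW0_def
  have hW0o : IsOpen W0 := hUho.preimage (continuous_snd.prodMk continuous_const)
  have hdW0 : ContDiffOn ℝ (⊤:ℕ∞) (fun q : E2 => d q.2) W0 := by
    apply ContDiffOn.sub
    · exact hhsm.comp ((contDiff_snd.prodMk contDiff_const).contDiffOn) (fun q hq => hq)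
    · exact (contDiff_snd.prodMk contDiff_const).contDiffOn
  have hHsm : ContDiffOn ℝ (⊤:ℕ∞) HH W0 := by
    apply ContDiffOn.add
    · exact (contDiff_snd.smul contDiff_const).contDiffOn
    · exact ContDiffOn.smul contDiff_fst.contDiffOn hdW0
  set W : Set E2 := W0 ∩ HH ⁻¹' Ug with hW_def
  have hWo : IsOpen W := hHsm.continuousOn.isOpen_inter_preimage hW0o hUgo
  have hWW0 : W ⊆ W0 := Set.inter_subset_left
  have husm : ContDiffOn ℝ (⊤:ℕ∞) uu W :=
    hgsm.comp (hHsm.mono hWW0) (fun q hq => hq.2)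
  -- convex combination form
  have hHHeq : ∀ q : E2, HH q = (1 - q.1) • ((q.2, 0) : E2) + q.1 • c q.2 := by
    intro q
    show q.2 • ((1:ℝ),(0:ℝ)) + q.1 • (c q.2 - (q.2,0)) = _
    have h1 : ((q.2,(0:ℝ)):E2) = q.2 • ((1:ℝ),(0:ℝ)) := by simp [Prod.ext_iff]
    rw [h1]
    module
  have hHdisk : ∀ q : E2, q.1 ∈ Set.Icc (0:ℝ) 1 → q.2 ∈ Set.Icc (0:ℝ) 1 → HH q ∈ Disk := by
    intro q h1 h2
    rw [hHHeq]
    exact disk_comb' (hdisk _ h2) (h.mapsTo (hdisk _ h2)) h1.1 h1.2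
  have hsqW : ∀ q : E2, q.1 ∈ Set.Icc (0:ℝ) 1 → q.2 ∈ Set.Icc (0:ℝ) 1 → q ∈ W := by
    intro q h1 h2
    exact ⟨hUhs (hdisk _ h2), hUgs (hHdisk q h1 h2)⟩
  -- derivative of d
  have hdd : ∀ t : ℝ, ((t,(0:ℝ)):E2) ∈ Uh → HasDerivAt d (d' t) t := by
    intro t ht
    have hj : HasDerivAt (fun t : ℝ => ((t,(0:ℝ)) : E2)) ((1:ℝ),(0:ℝ)) t :=
      (hasDerivAt_id t).prodMk (hasDerivAt_const t (0:ℝ))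
    have hhd : DifferentiableAt ℝ h.toFun (t,0) :=
      ((hhsm.differentiableOn (by simp)).differentiableAt
        (hUho.mem_nhds ht))
    have hcd : HasDerivAt c (c' t) t := hhd.hasFDerivAt.comp_hasDerivAt t hj
    exact hcd.sub hj
  -- derivative of HH
  have hHd : ∀ q : E2, q ∈ W0 →
      HasFDerivAt HH ((ContinuousLinearMap.snd ℝ ℝ ℝ).smulRight ((1:ℝ),(0:ℝ))
        + (q.1 • (((1 : ℝ →L[ℝ] ℝ).smulRight (d' q.2)).comp (ContinuousLinearMap.snd ℝ ℝ ℝ))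
           + (ContinuousLinearMap.fst ℝ ℝ ℝ).smulRight (d q.2))) q := by
    intro q hq
    have h1 : HasFDerivAt (fun p : E2 => p.2 • ((1:ℝ),(0:ℝ)))
        ((ContinuousLinearMap.snd ℝ ℝ ℝ).smulRight ((1:ℝ),(0:ℝ))) q :=
      ((ContinuousLinearMap.snd ℝ ℝ ℝ).smulRight ((1:ℝ),(0:ℝ))).hasFDerivAt
    have h2 : HasFDerivAt (fun p : E2 => d p.2)
        ((((1 : ℝ →L[ℝ] ℝ).smulRight (d' q.2)).comp (ContinuousLinearMap.snd ℝ ℝ ℝ))) q :=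
      (hdd q.2 hq).hasFDerivAt.comp q (ContinuousLinearMap.snd ℝ ℝ ℝ).hasFDerivAt
    have h3 : HasFDerivAt (fun p : E2 => p.1)
        (ContinuousLinearMap.fst ℝ ℝ ℝ) q := (ContinuousLinearMap.fst ℝ ℝ ℝ).hasFDerivAt
    exact h1.add (h3.smul h2)
  have hHd10 : ∀ q : E2, q ∈ W0 → fderiv ℝ HH q (1,0) = d q.2 := by
    intro q hq
    rw [(hHd q hq).fderiv]
    simp [ContinuousLinearMap.smulRight_apply, ContinuousLinearMap.comp_apply]
  have hHd01 : ∀ q : E2, q ∈ W0 → fderiv ℝ HH q (0,1) = ((1:ℝ),(0:ℝ)) + q.1 • d' q.2 := by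
    intro q hq
    rw [(hHd q hq).fderiv]
    simp [ContinuousLinearMap.smulRight_apply, ContinuousLinearMap.comp_apply]
  -- derivative of uu
  have hgd : ∀ p : E2, p ∈ Ug → DifferentiableAt ℝ g.toFun p := by
    intro p hp
    exact (hgsm.differentiableOn (by simp)).differentiableAt
      (hUgo.mem_nhds hp)
  have hud : ∀ q : E2, q ∈ W →
      HasFDerivAt uu ((fderiv ℝ g.toFun (HH q)).comp
        ((ContinuousLinearMap.snd ℝ ℝ ℝ).smulRight ((1:ℝ),(0:ℝ))
          + (q.1 • (((1 : ℝ →L[ℝ] ℝ).smulRight (d' q.2)).comp (ContinuousLinearMap.snd ℝ ℝ ℝ))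
           + (ContinuousLinearMap.fst ℝ ℝ ℝ).smulRight (d q.2)))) q := by
    intro q hq
    exact (hgd _ hq.2).hasFDerivAt.comp q (hHd q hq.1)
  have hud10 : ∀ q : E2, q ∈ W → fderiv ℝ uu q (1,0) = fderiv ℝ g.toFun (HH q) (d q.2) := by
    intro q hq
    rw [(hud q hq).fderiv]
    simp [ContinuousLinearMap.smulRight_apply, ContinuousLinearMap.comp_apply]
  have hud01 : ∀ q : E2, q ∈ W →
      fderiv ℝ uu q (0,1) = fderiv ℝ g.toFun (HH q) (((1:ℝ),(0:ℝ)) + q.1 • d' q.2) := by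
    intro q hq
    rw [(hud q hq).fderiv]
    simp [ContinuousLinearMap.smulRight_apply, ContinuousLinearMap.comp_apply]
  -- the 1-form difference along the homotopy
  set FF : E2 → ℝ := fun q => Pf uu (0,1) q - Pf HH (0,1) q with hFF_def
  set KK : E2 → ℝ := fun q => Pf uu (1,0) q - Pf HH (1,0) q with hKK_def
  have hHsmW : ContDiffOn ℝ (⊤:ℕ∞) HH W := hHsm.mono hWW0
  have hFFsm : ContDiffOn ℝ (⊤:ℕ∞) FF W :=
    (contDiffOn_Pf hWo husm (0,1)).sub (contDiffOn_Pf hWo hHsmW (0,1))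
  have hKKsm : ContDiffOn ℝ (⊤:ℕ∞) KK W :=
    (contDiffOn_Pf hWo husm (1,0)).sub (contDiffOn_Pf hWo hHsmW (1,0))
  have hFFc : ContinuousOn FF W := hFFsm.continuousOn
  have hKKc : ContinuousOn KK W := hKKsm.continuousOn
  set DF : E2 → ℝ := fun q => fderiv ℝ FF q (1,0) with hDF_def
  set DK : E2 → ℝ := fun q => fderiv ℝ KK q (0,1) with hDK_def
  have hDFc : ContinuousOn DF W := by
    have h1 : ContinuousOn (fderiv ℝ FF) W :=
      hFFsm.continuousOn_fderiv_of_isOpen hWo (by exact_mod_cast le_top)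
    exact h1.clm_apply continuousOn_const
  have hDKc : ContinuousOn DK W := by
    have h1 : ContinuousOn (fderiv ℝ KK) W :=
      hKKsm.continuousOn_fderiv_of_isOpen hWo (by exact_mod_cast le_top)
    exact h1.clm_apply continuousOn_const
  -- differentiability at points of W
  have hdFF : ∀ q : E2, q ∈ W → DifferentiableAt ℝ FF q := by
    intro q hq
    exact ((hFFsm q hq).contDiffAt (hWo.mem_nhds hq)).differentiableAt
      (by simp)
  have hdKK : ∀ q : E2, q ∈ W → DifferentiableAt ℝ KK q := by
    intro q hq
    exact ((hKKsm q hq).contDiffAt (hWo.mem_nhds hq)).differentiableAt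
      (by simp)
  -- THE KEY IDENTITY : DF = DK on the square
  have hkey : ∀ q : E2, q ∈ W → HH q ∈ Disk → DF q = DK q := by
    intro q hq hqD
    have hdPu1 : DifferentiableAt ℝ (Pf uu (0,1)) q :=
      (((contDiffOn_Pf hWo husm (0,1)) q hq).contDiffAt (hWo.mem_nhds hq)).differentiableAt
        (by simp)
    have hdPH1 : DifferentiableAt ℝ (Pf HH (0,1)) q :=
      (((contDiffOn_Pf hWo hHsmW (0,1)) q hq).contDiffAt (hWo.mem_nhds hq)).differentiableAt
        (by simp)
    have hdPu2 : DifferentiableAt ℝ (Pf uu (1,0)) q :=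
      (((contDiffOn_Pf hWo husm (1,0)) q hq).contDiffAt (hWo.mem_nhds hq)).differentiableAt
        (by simp)
    have hdPH2 : DifferentiableAt ℝ (Pf HH (1,0)) q :=
      (((contDiffOn_Pf hWo hHsmW (1,0)) q hq).contDiffAt (hWo.mem_nhds hq)).differentiableAt
        (by simp)
    have hF : DF q = fderiv ℝ (Pf uu (0,1)) q (1,0) - fderiv ℝ (Pf HH (0,1)) q (1,0) := by
      show fderiv ℝ FF q (1,0) = _
      rw [show FF = fun p => Pf uu (0,1) p - Pf HH (0,1) p from rfl]
      rw [fderiv_fun_sub hdPu1 hdPH1]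
      simp
    have hK : DK q = fderiv ℝ (Pf uu (1,0)) q (0,1) - fderiv ℝ (Pf HH (1,0)) q (0,1) := by
      show fderiv ℝ KK q (0,1) = _
      rw [show KK = fun p => Pf uu (1,0) p - Pf HH (1,0) p from rfl]
      rw [fderiv_fun_sub hdPu2 hdPH2]
      simp
    have hku := key_identity hWo husm hq
    have hkH := key_identity hWo hHsmW hq
    -- cross terms agree because g is area preserving
    have hcross :
        (fderiv ℝ uu q (1,0)).1 * (fderiv ℝ uu q (0,1)).2
          - (fderiv ℝ uu q (1,0)).2 * (fderiv ℝ uu q (0,1)).1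
        = (fderiv ℝ HH q (1,0)).1 * (fderiv ℝ HH q (0,1)).2
          - (fderiv ℝ HH q (1,0)).2 * (fderiv ℝ HH q (0,1)).1 := by
      rw [hud10 q hq, hud01 q hq, hHd10 q hq.1, hHd01 q hq.1]
      rw [cross_comp (fderiv ℝ g.toFun (HH q)) (d q.2) (((1:ℝ),(0:ℝ)) + q.1 • d' q.2)]
      rw [g.areaPreserving (HH q) hqD]
      ring
    linarith [hku, hkH, hcross, hF, hK]
  have hsq : ∀ s t : ℝ, s ∈ Set.Icc (0:ℝ) 1 → t ∈ Set.Icc (0:ℝ) 1 → ((s,t):E2) ∈ W := by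
    intro s t hs ht
    exact hsqW (s,t) hs ht
  have huIcc : Set.uIcc (0:ℝ) 1 = Set.Icc (0:ℝ) 1 := Set.uIcc_of_le zero_le_one
  -- FTC in the `s` direction for FF
  have hFTCs : ∀ t ∈ Set.Icc (0:ℝ) 1,
      FF (1,t) - FF (0,t) = ∫ s in (0:ℝ)..1, DF (s,t) := by
    intro t ht
    have hder : ∀ s ∈ Set.uIcc (0:ℝ) 1, HasDerivAt (fun s => FF (s,t)) (DF (s,t)) s := by
      intro s hs
      rw [huIcc] at hs
      have h1 : HasFDerivAt FF (fderiv ℝ FF (s,t)) (s,t) := (hdFF _ (hsq s t hs ht)).hasFDerivAt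
      have h2 : HasDerivAt (fun s : ℝ => ((s,t) : E2)) ((1:ℝ),(0:ℝ)) s :=
        (hasDerivAt_id s).prodMk (hasDerivAt_const s t)
      exact h1.comp_hasDerivAt s h2
    have hint : IntervalIntegrable (fun s => DF (s,t)) volume 0 1 := by
      apply ContinuousOn.intervalIntegrable
      apply hDFc.comp (Continuous.continuousOn (by fun_prop))
      intro s hs
      rw [huIcc] at hs
      exact hsq s t hs ht
    exact (intervalIntegral.integral_eq_sub_of_hasDerivAt hder hint).symm
  -- FTC in the `t` direction for KK
  have hFTCt : ∀ s ∈ Set.Icc (0:ℝ) 1,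
      (∫ t in (0:ℝ)..1, DK (s,t)) = KK (s,1) - KK (s,0) := by
    intro s hs
    have hder : ∀ t ∈ Set.uIcc (0:ℝ) 1, HasDerivAt (fun t => KK (s,t)) (DK (s,t)) t := by
      intro t ht
      rw [huIcc] at ht
      have h1 : HasFDerivAt KK (fderiv ℝ KK (s,t)) (s,t) := (hdKK _ (hsq s t hs ht)).hasFDerivAt
      have h2 : HasDerivAt (fun t : ℝ => ((s,t) : E2)) ((0:ℝ),(1:ℝ)) t :=
        (hasDerivAt_const t s).prodMk (hasDerivAt_id t)
      exact h1.comp_hasDerivAt t h2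
    have hint : IntervalIntegrable (fun t => DK (s,t)) volume 0 1 := by
      apply ContinuousOn.intervalIntegrable
      apply hDKc.comp (Continuous.continuousOn (by fun_prop))
      intro t ht
      rw [huIcc] at ht
      exact hsq s t hs ht
    exact intervalIntegral.integral_eq_sub_of_hasDerivAt hder hint
  -- boundary values of KK vanish
  have hc1 : c 1 = ((1:ℝ),(0:ℝ)) := hhB (1,0) (by simp [Bdry])
  have hc0 : c 0 = ((0:ℝ),(0:ℝ)) := hh0
  have hd1 : d 1 = 0 := by
    show c 1 - ((1:ℝ),(0:ℝ)) = 0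
    rw [hc1]; simp
  have hd0 : d 0 = 0 := by
    show c 0 - ((0:ℝ),(0:ℝ)) = 0
    rw [hc0]; simp
  have hKKbd1 : ∀ s ∈ Set.Icc (0:ℝ) 1, KK (s,1) = 0 := by
    intro s hs
    have hqW : ((s,(1:ℝ)):E2) ∈ W := hsq s 1 hs (by norm_num)
    have e1 : fderiv ℝ HH (s,1) (1,0) = (0 : E2) := by
      rw [hHd10 _ hqW.1]; exact hd1
    have e2 : fderiv ℝ uu (s,1) (1,0) = (0 : E2) := by
      rw [hud10 _ hqW]
      show fderiv ℝ g.toFun (HH (s,1)) (d 1) = 0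
      rw [hd1]; simp
    show Pf uu (1,0) (s,1) - Pf HH (1,0) (s,1) = 0
    simp [Pf, e1, e2]
  have hKKbd0 : ∀ s ∈ Set.Icc (0:ℝ) 1, KK (s,0) = 0 := by
    intro s hs
    have hqW : ((s,(0:ℝ)):E2) ∈ W := hsq s 0 hs (by norm_num)
    have e1 : fderiv ℝ HH (s,0) (1,0) = (0 : E2) := by
      rw [hHd10 _ hqW.1]; exact hd0
    have e2 : fderiv ℝ uu (s,0) (1,0) = (0 : E2) := by
      rw [hud10 _ hqW]
      show fderiv ℝ g.toFun (HH (s,0)) (d 0) = 0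
      rw [hd0]; simp
    show Pf uu (1,0) (s,0) - Pf HH (1,0) (s,0) = 0
    simp [Pf, e1, e2]
  -- the homotopy argument
  have hmain : (∫ t in (0:ℝ)..1, FF (1,t)) = ∫ t in (0:ℝ)..1, FF (0,t) := by
    have hFF1i : IntervalIntegrable (fun t => FF (1,t)) volume 0 1 := by
      apply ContinuousOn.intervalIntegrable
      apply hFFc.comp (Continuous.continuousOn (by fun_prop))
      intro t ht
      rw [huIcc] at ht
      exact hsq 1 t (by norm_num) ht
    have hFF0i : IntervalIntegrable (fun t => FF (0,t)) volume 0 1 := by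
      apply ContinuousOn.intervalIntegrable
      apply hFFc.comp (Continuous.continuousOn (by fun_prop))
      intro t ht
      rw [huIcc] at ht
      exact hsq 0 t (by norm_num) ht
    have key : (∫ t in (0:ℝ)..1, (FF (1,t) - FF (0,t))) = 0 := by
      have e1 : (∫ t in (0:ℝ)..1, (FF (1,t) - FF (0,t)))
          = ∫ t in (0:ℝ)..1, ∫ s in (0:ℝ)..1, DF (s,t) := by
        apply intervalIntegral.integral_congr
        intro t ht
        rw [huIcc] at ht
        exact hFTCs t ht
      have e2 : (∫ t in (0:ℝ)..1, ∫ s in (0:ℝ)..1, DF (s,t))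
          = ∫ t in (0:ℝ)..1, ∫ s in (0:ℝ)..1, DK (s,t) := by
        apply intervalIntegral.integral_congr
        intro t ht
        rw [huIcc] at ht
        apply intervalIntegral.integral_congr
        intro s hs
        rw [huIcc] at hs
        exact hkey (s,t) (hsq s t hs ht) (hHdisk (s,t) hs ht)
      have e3 : (∫ t in (0:ℝ)..1, ∫ s in (0:ℝ)..1, DK (s,t))
          = ∫ s in (0:ℝ)..1, ∫ t in (0:ℝ)..1, DK (s,t) := by
        apply square_swap
        apply hDKc.mono
        intro q hq
        exact hsq q.1 q.2 hq.1 hq.2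
      have e4 : (∫ s in (0:ℝ)..1, ∫ t in (0:ℝ)..1, DK (s,t)) = 0 := by
        have : (∫ s in (0:ℝ)..1, ∫ t in (0:ℝ)..1, DK (s,t))
            = ∫ s in (0:ℝ)..1, (0:ℝ) := by
          apply intervalIntegral.integral_congr
          intro s hs
          rw [huIcc] at hs
          show (∫ t in (0:ℝ)..1, DK (s,t)) = 0
          rw [hFTCt s hs, hKKbd1 s hs, hKKbd0 s hs]
          ring
        rw [this]
        simp
      rw [e1, e2, e3, e4]
    have := intervalIntegral.integral_sub hFF1i hFF0i
    rw [key] at this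
    linarith [this]
  -- generic integrability of tau-integrands
  have hInt : ∀ (f : E2 → E2) (U : Set E2), IsOpen U → Disk ⊆ U → ContDiffOn ℝ (⊤:ℕ∞) f U →
      IntervalIntegrable (fun t => (1 / 2) *
        ((f (t, 0)).1 * (fderiv ℝ f (t, 0) (1, 0)).2
          - (f (t, 0)).2 * (fderiv ℝ f (t, 0) (1, 0)).1)) volume 0 1 := by
    intro f U hUo hUs hf
    apply ContinuousOn.intervalIntegrable
    have hj : ContinuousOn (fun t : ℝ => ((t,(0:ℝ)):E2)) (Set.uIcc 0 1) := by fun_prop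
    have hmap : Set.MapsTo (fun t : ℝ => ((t,(0:ℝ)):E2)) (Set.uIcc 0 1) U := by
      intro t ht
      rw [huIcc] at ht
      exact hUs (hdisk t ht)
    have h1 : ContinuousOn (fun t : ℝ => f (t,0)) (Set.uIcc 0 1) :=
      hf.continuousOn.comp hj hmap
    have h2 : ContinuousOn (fun t : ℝ => fderiv ℝ f (t,0)) (Set.uIcc 0 1) :=
      (hf.continuousOn_fderiv_of_isOpen hUo (by exact_mod_cast le_top)).comp hj hmap
    apply ContinuousOn.mul continuousOn_const
    apply ContinuousOn.sub
    · exact (continuous_fst.comp_continuousOn h1).mul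
        (continuous_snd.comp_continuousOn (h2.clm_apply continuousOn_const))
    · exact (continuous_snd.comp_continuousOn h1).mul
        (continuous_fst.comp_continuousOn (h2.clm_apply continuousOn_const))
  -- identification of tau g with the s = 0 slice
  have htaug : tau g = ∫ t in (0:ℝ)..1, (1/2) * FF (0,t) := by
    unfold tau
    apply intervalIntegral.integral_congr
    intro t ht
    rw [huIcc] at ht
    have hqW : (((0:ℝ),t) : E2) ∈ W := hsq 0 t (by norm_num) ht
    have hHt0 : HH ((0:ℝ),t) = ((t:ℝ),(0:ℝ)) := by
      show (((0:ℝ),t):E2).2 • ((1:ℝ),(0:ℝ)) + (((0:ℝ),t):E2).1 • d (((0:ℝ),t):E2).2 = _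
      simp [Prod.ext_iff]
    have hD01 : fderiv ℝ HH ((0:ℝ),t) (0,1) = ((1:ℝ),(0:ℝ)) := by
      rw [hHd01 _ hqW.1]
      simp
    have hU01 : fderiv ℝ uu ((0:ℝ),t) (0,1) = fderiv ℝ g.toFun ((t:ℝ),(0:ℝ)) (1,0) := by
      rw [hud01 _ hqW, hHt0]
      congr 1
      simp
    have huu0 : uu ((0:ℝ),t) = g.toFun ((t:ℝ),(0:ℝ)) := by
      show g.toFun (HH ((0:ℝ),t)) = _
      rw [hHt0]
    show (1 / 2) * ((g.toFun (t, 0)).1 * (fderiv ℝ g.toFun (t, 0) (1, 0)).2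
        - (g.toFun (t, 0)).2 * (fderiv ℝ g.toFun (t, 0) (1, 0)).1)
      = (1/2) * FF ((0:ℝ),t)
    have hval : FF ((0:ℝ),t) = (g.toFun (t, 0)).1 * (fderiv ℝ g.toFun (t, 0) (1, 0)).2
        - (g.toFun (t, 0)).2 * (fderiv ℝ g.toFun (t, 0) (1, 0)).1 := by
      show Pf uu (0,1) ((0:ℝ),t) - Pf HH (0,1) ((0:ℝ),t) = _
      simp only [Pf]
      rw [hU01, hD01, hHt0, huu0]
      simp
    rw [hval]
  -- identification of tau gh - tau h with the s = 1 slice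
  have hghh : tau gh - tau h = ∫ t in (0:ℝ)..1, (1/2) * FF (1,t) := by
    have hAi := hInt gh.toFun Uk hUko hUks hksm
    have hBi := hInt h.toFun Uh hUho hUhs hhsm
    have hsub : tau gh - tau h = ∫ t in (0:ℝ)..1,
        ((1 / 2) * ((gh.toFun (t, 0)).1 * (fderiv ℝ gh.toFun (t, 0) (1, 0)).2
            - (gh.toFun (t, 0)).2 * (fderiv ℝ gh.toFun (t, 0) (1, 0)).1)
         - (1 / 2) * ((h.toFun (t, 0)).1 * (fderiv ℝ h.toFun (t, 0) (1, 0)).2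
            - (h.toFun (t, 0)).2 * (fderiv ℝ h.toFun (t, 0) (1, 0)).1)) := by
      unfold tau
      exact (intervalIntegral.integral_sub hAi hBi).symm
    rw [hsub, intervalIntegral.integral_of_le zero_le_one,
      intervalIntegral.integral_of_le zero_le_one]
    apply MeasureTheory.setIntegral_congr_ae measurableSet_Ioc
    have h1 : ∀ᵐ t : ℝ, t ≠ (1:ℝ) := by
      refine MeasureTheory.ae_iff.2 ?_
      have : {a : ℝ | ¬ a ≠ 1} = {(1:ℝ)} := by
        ext a
        simp
      rw [this]
      exact Real.volume_singleton
    filter_upwards [h1] with t ht1 htIoc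
    have ht : t ∈ Set.Icc (0:ℝ) 1 := ⟨le_of_lt htIoc.1, htIoc.2⟩
    have htlt : t < 1 := lt_of_le_of_ne htIoc.2 ht1
    have hqW : (((1:ℝ),t) : E2) ∈ W := hsq 1 t (by norm_num) ht
    have hctD : c t ∈ Disk := h.mapsTo (hdisk t ht)
    -- HH and uu at (1,t)
    have hHt1 : HH ((1:ℝ),t) = c t := by
      show (((1:ℝ),t):E2).2 • ((1:ℝ),(0:ℝ)) + (((1:ℝ),t):E2).1 • d (((1:ℝ),t):E2).2 = _
      show t • ((1:ℝ),(0:ℝ)) + (1:ℝ) • (c t - (t,0)) = c t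
      have h1 : ((t,(0:ℝ)):E2) = t • ((1:ℝ),(0:ℝ)) := by simp [Prod.ext_iff]
      rw [h1]
      module
    have hD01 : fderiv ℝ HH ((1:ℝ),t) (0,1) = c' t := by
      rw [hHd01 _ hqW.1]
      show ((1:ℝ),(0:ℝ)) + (1:ℝ) • (c' t - ((1:ℝ),(0:ℝ))) = c' t
      module
    have hU01 : fderiv ℝ uu ((1:ℝ),t) (0,1) = fderiv ℝ g.toFun (c t) (c' t) := by
      rw [hud01 _ hqW, hHt1]
      congr 1
      show ((1:ℝ),(0:ℝ)) + (1:ℝ) • (c' t - ((1:ℝ),(0:ℝ))) = c' t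
      module
    have huu1 : uu ((1:ℝ),t) = g.toFun (c t) := by
      show g.toFun (HH ((1:ℝ),t)) = _
      rw [hHt1]
    -- gh agrees with g ∘ h near (t,0)
    have hO : ∀ᶠ p in nhds ((t,(0:ℝ)):E2), (fun p => g.toFun (h.toFun p)) p = gh.toFun p := by
      have hOo : IsOpen {p : E2 | p.1^2 + p.2^2 < 1} := by
        apply isOpen_lt _ continuous_const
        fun_prop
      have hmem : ((t,(0:ℝ)):E2) ∈ {p : E2 | p.1^2 + p.2^2 < 1} := by
        simp only [Set.mem_setOf_eq]
        nlinarith [ht.1]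
      filter_upwards [hOo.mem_nhds hmem] with p hp
      exact (hcomp p (le_of_lt hp)).symm
    have hghval : gh.toFun ((t:ℝ),(0:ℝ)) = g.toFun (c t) := hcomp (t,0) (hdisk t ht)
    have hhd : DifferentiableAt ℝ h.toFun ((t:ℝ),(0:ℝ)) :=
      (hhsm.differentiableOn (by simp)).differentiableAt
        (hUho.mem_nhds (hUhs (hdisk t ht)))
    have hchain : HasFDerivAt (fun p => g.toFun (h.toFun p))
        ((fderiv ℝ g.toFun (c t)).comp (fderiv ℝ h.toFun ((t:ℝ),(0:ℝ)))) ((t:ℝ),(0:ℝ)) :=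
      (hgd _ (hUgs hctD)).hasFDerivAt.comp (((t:ℝ),(0:ℝ)):E2) hhd.hasFDerivAt
    have hghder : fderiv ℝ gh.toFun ((t:ℝ),(0:ℝ)) (1,0) = fderiv ℝ g.toFun (c t) (c' t) := by
      have e1 : fderiv ℝ gh.toFun ((t:ℝ),(0:ℝ))
          = fderiv ℝ (fun p => g.toFun (h.toFun p)) ((t:ℝ),(0:ℝ)) :=
        (Filter.EventuallyEq.fderiv_eq hO).symm
      rw [e1, hchain.fderiv]
      rfl
    -- final pointwise identity
    show (1 / 2) * ((gh.toFun (t, 0)).1 * (fderiv ℝ gh.toFun (t, 0) (1, 0)).2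
            - (gh.toFun (t, 0)).2 * (fderiv ℝ gh.toFun (t, 0) (1, 0)).1)
         - (1 / 2) * ((h.toFun (t, 0)).1 * (fderiv ℝ h.toFun (t, 0) (1, 0)).2
            - (h.toFun (t, 0)).2 * (fderiv ℝ h.toFun (t, 0) (1, 0)).1)
      = (1/2) * FF ((1:ℝ),t)
    have hval : FF ((1:ℝ),t) = ((g.toFun (c t)).1 * (fderiv ℝ g.toFun (c t) (c' t)).2
          - (g.toFun (c t)).2 * (fderiv ℝ g.toFun (c t) (c' t)).1)
        - ((c t).1 * (c' t).2 - (c t).2 * (c' t).1) := by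
      show Pf uu (0,1) ((1:ℝ),t) - Pf HH (0,1) ((1:ℝ),t) = _
      simp only [Pf]
      rw [hU01, hD01, hHt1, huu1]
    rw [hval, hghval, hghder]
    show _ - (1 / 2) * ((c t).1 * (c' t).2 - (c t).2 * (c' t).1) = _
    ring
  -- conclusion
  have e1 : (∫ t in (0:ℝ)..1, (1/2) * FF (1,t)) = ∫ t in (0:ℝ)..1, (1/2) * FF (0,t) := by
    rw [intervalIntegral.integral_const_mul, intervalIntegral.integral_const_mul, hmain]
  linarith [hghh, htaug, e1]
end
end

section
/- The flux homomorphism is surjective: for every real number s there exists g ∈ G_rel with flux_ℝ(g) = s. -/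
open MeasureTheory

noncomputable section

/-- Twist map: rotate `p` by angle `4s(|p|²-1)`. -/
def rot (s : ℝ) (p : ℝ × ℝ) : ℝ × ℝ :=
  (p.1 * Real.cos (4 * s * (p.1 * p.1 + p.2 * p.2 - 1))
      - p.2 * Real.sin (4 * s * (p.1 * p.1 + p.2 * p.2 - 1)),
   p.1 * Real.sin (4 * s * (p.1 * p.1 + p.2 * p.2 - 1))
      + p.2 * Real.cos (4 * s * (p.1 * p.1 + p.2 * p.2 - 1)))

lemma rot_norm (s : ℝ) (p : ℝ × ℝ) :
    (rot s p).1 * (rot s p).1 + (rot s p).2 * (rot s p).2 = p.1 * p.1 + p.2 * p.2 := by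
  simp only [rot]
  linear_combination (p.1 * p.1 + p.2 * p.2) *
    Real.sin_sq_add_cos_sq (4 * s * (p.1 * p.1 + p.2 * p.2 - 1))

lemma rot_zero (p : ℝ × ℝ) : rot 0 p = p := by simp [rot]

lemma rot_rot (s t : ℝ) (p : ℝ × ℝ) : rot t (rot s p) = rot (s + t) p := by
  have hr := rot_norm s p
  simp only [rot] at hr ⊢
  rw [hr]
  have h4 : 4 * (s + t) * (p.1 * p.1 + p.2 * p.2 - 1)
      = 4 * s * (p.1 * p.1 + p.2 * p.2 - 1) + 4 * t * (p.1 * p.1 + p.2 * p.2 - 1) := by ring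
  rw [h4, Real.cos_add, Real.sin_add]
  exact Prod.ext (by ring) (by ring)

lemma rot_contDiff (s : ℝ) : ContDiff ℝ (⊤ : ℕ∞) (rot s) := by
  have hθ : ContDiff ℝ (⊤ : ℕ∞) (fun p : ℝ × ℝ => 4 * s * (p.1 * p.1 + p.2 * p.2 - 1)) :=
    contDiff_const.mul (((contDiff_fst.mul contDiff_fst).add
      (contDiff_snd.mul contDiff_snd)).sub contDiff_const)
  exact ((contDiff_fst.mul (Real.contDiff_cos.comp hθ)).sub
      (contDiff_snd.mul (Real.contDiff_sin.comp hθ))).prodMk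
    ((contDiff_fst.mul (Real.contDiff_sin.comp hθ)).add
      (contDiff_snd.mul (Real.contDiff_cos.comp hθ)))

lemma rot_fderiv (s : ℝ) (p v : ℝ × ℝ) :
    fderiv ℝ (rot s) p v =
      (v.1 * Real.cos (4 * s * (p.1 * p.1 + p.2 * p.2 - 1))
          - p.1 * Real.sin (4 * s * (p.1 * p.1 + p.2 * p.2 - 1))
              * (4 * s * (2 * p.1 * v.1 + 2 * p.2 * v.2))
          - (v.2 * Real.sin (4 * s * (p.1 * p.1 + p.2 * p.2 - 1))
              + p.2 * Real.cos (4 * s * (p.1 * p.1 + p.2 * p.2 - 1))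
                  * (4 * s * (2 * p.1 * v.1 + 2 * p.2 * v.2))),
       v.1 * Real.sin (4 * s * (p.1 * p.1 + p.2 * p.2 - 1))
          + p.1 * Real.cos (4 * s * (p.1 * p.1 + p.2 * p.2 - 1))
              * (4 * s * (2 * p.1 * v.1 + 2 * p.2 * v.2))
          + (v.2 * Real.cos (4 * s * (p.1 * p.1 + p.2 * p.2 - 1))
              - p.2 * Real.sin (4 * s * (p.1 * p.1 + p.2 * p.2 - 1))
                  * (4 * s * (2 * p.1 * v.1 + 2 * p.2 * v.2)))) := by
  have hfst : HasFDerivAt (fun p : ℝ × ℝ => p.1) (ContinuousLinearMap.fst ℝ ℝ ℝ) p :=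
    hasFDerivAt_fst
  have hsnd : HasFDerivAt (fun p : ℝ × ℝ => p.2) (ContinuousLinearMap.snd ℝ ℝ ℝ) p :=
    hasFDerivAt_snd
  have hsq := ((hfst.mul hfst).add (hsnd.mul hsnd)).sub_const 1
  have hθ := hsq.const_mul (4 * s)
  have h1 := (hfst.mul hθ.cos).sub (hsnd.mul hθ.sin)
  have h2 := (hfst.mul hθ.sin).add (hsnd.mul hθ.cos)
  have hL : HasFDerivAt (rot s) _ p := h1.prodMk h2
  rw [hL.fderiv]
  simp [ContinuousLinearMap.sub_apply, ContinuousLinearMap.add_apply,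
    ContinuousLinearMap.smul_apply]
  constructor <;> ring

lemma rot_mapsTo (s : ℝ) : Set.MapsTo (rot s) Disk Disk := by
  intro p hp
  have h := rot_norm s p
  simp only [Disk, Set.mem_setOf_eq, pow_two] at hp ⊢
  rw [h]; exact hp

/-- The symplectomorphism realizing flux `s`. -/
def mySymp (s : ℝ) : SympD where
  toFun := rot s
  invFun := rot (-s)
  mapsTo := rot_mapsTo s
  invMapsTo := rot_mapsTo (-s)
  leftInv := by
    intro p _
    rw [rot_rot, show s + -s = 0 by ring, rot_zero]
  rightInv := by
    intro p _
    rw [rot_rot, show -s + s = 0 by ring, rot_zero]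
  smooth := ⟨Set.univ, isOpen_univ, Set.subset_univ _, (rot_contDiff s).contDiffOn⟩
  invSmooth := ⟨Set.univ, isOpen_univ, Set.subset_univ _, (rot_contDiff (-s)).contDiffOn⟩
  areaPreserving := by
    intro p _
    rw [rot_fderiv, rot_fderiv]
    norm_num
    linear_combination Real.sin_sq_add_cos_sq (4 * s * (p.1 * p.1 + p.2 * p.2 - 1))

lemma tau_integrand (s t : ℝ) :
    (1 / 2) * ((rot s (t, 0)).1 * (fderiv ℝ (rot s) (t, 0) (1, 0)).2
      - (rot s (t, 0)).2 * (fderiv ℝ (rot s) (t, 0) (1, 0)).1) = 4 * s * t ^ 3 := by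
  rw [rot_fderiv]
  simp only [rot]
  norm_num
  linear_combination (4 * s * t ^ 3) * Real.sin_sq_add_cos_sq (4 * s * (t * t - 1))

/-- the flux homomorphism `flux_ℝ : G_rel → ℝ` is surjective. -/
theorem flux_surjective (s : ℝ) : ∃ g : SympD, IsGrel g ∧ tau g = s := by
  refine ⟨mySymp s, ⟨?_, ?_⟩, ?_⟩
  · show rot s (0, 0) = (0, 0)
    simp [rot]
  · intro p hp
    have h0 : 4 * s * (p.1 * p.1 + p.2 * p.2 - 1) = 0 := by
      have : p.1 * p.1 + p.2 * p.2 = 1 := by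
        have := hp; simp only [Bdry, Set.mem_setOf_eq, pow_two] at this; exact this
      rw [this]; ring
    show rot s p = p
    simp [rot, h0]
  · show tau (mySymp s) = s
    have h1 : tau (mySymp s) = ∫ t in (0:ℝ)..1, 4 * s * t ^ 3 := by
      apply intervalIntegral.integral_congr
      intro t _
      exact tau_integrand s t
    rw [h1, intervalIntegral.integral_const_mul, integral_pow]
    norm_num
    ring
end
end

section
/- For all g, h ∈ G and any lifts φ, ψ of the boundary restrictions g|_{∂D}, h|_{∂D} respectively, one has τ(g ∘ h) − τ(g) − τ(h) = ½(φ(ψ(0)) − φ(0) − ψ(0)). -/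
open MeasureTheory

noncomputable section

/-! ### Auxiliary machinery -/

/-- Dot product on `ℝ × ℝ`, used to express 1-forms. -/
def dotp (u v : ℝ × ℝ) : ℝ := u.1 * v.1 + u.2 * v.2

/-- The 1-form `g*η − η`, encoded as an `ℝ²`-valued map via `dotp`. -/
def Af (f : ℝ × ℝ → ℝ × ℝ) (p : ℝ × ℝ) : ℝ × ℝ :=
  ((1 / 2) * ((f p).1 * (fderiv ℝ f p (1, 0)).2 - (f p).2 * (fderiv ℝ f p (1, 0)).1)
      + (1 / 2) * p.2,
   (1 / 2) * ((f p).1 * (fderiv ℝ f p (0, 1)).2 - (f p).2 * (fderiv ℝ f p (0, 1)).1)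
      - (1 / 2) * p.1)

lemma hasDerivAt_dotp {f g : ℝ → ℝ × ℝ} {f' g' : ℝ × ℝ} {x : ℝ}
    (hf : HasDerivAt f f' x) (hg : HasDerivAt g g' x) :
    HasDerivAt (fun y => dotp (f y) (g y)) (dotp f' (g x) + dotp (f x) g') x := by
  have hf1 : HasDerivAt (fun y => (f y).1) f'.1 x := by
    simpa [Function.comp_def] using (ContinuousLinearMap.fst ℝ ℝ ℝ).hasFDerivAt.comp_hasDerivAt x hf
  have hf2 : HasDerivAt (fun y => (f y).2) f'.2 x := by
    simpa [Function.comp_def] using (ContinuousLinearMap.snd ℝ ℝ ℝ).hasFDerivAt.comp_hasDerivAt x hf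
  have hg1 : HasDerivAt (fun y => (g y).1) g'.1 x := by
    simpa [Function.comp_def] using (ContinuousLinearMap.fst ℝ ℝ ℝ).hasFDerivAt.comp_hasDerivAt x hg
  have hg2 : HasDerivAt (fun y => (g y).2) g'.2 x := by
    simpa [Function.comp_def] using (ContinuousLinearMap.snd ℝ ℝ ℝ).hasFDerivAt.comp_hasDerivAt x hg
  have := ((hf1.mul hg1).add (hf2.mul hg2))
  convert this using 1
  · rfl
  · rfl
  · rfl
  · simp [dotp]; ring

lemma smul_mem_Disk {p : ℝ × ℝ} (hp : p ∈ Disk) {t : ℝ} (ht : t ∈ Set.Icc (0:ℝ) 1) :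
    t • p ∈ Disk := by
  obtain ⟨h0, h1⟩ := ht
  simp only [Disk, Set.mem_setOf_eq] at hp ⊢
  have h : (t • p).1 = t * p.1 ∧ (t • p).2 = t * p.2 := ⟨rfl, rfl⟩
  rw [h.1, h.2]
  have ht2 : t ^ 2 ≤ 1 := by nlinarith
  nlinarith [mul_nonneg (sub_nonneg.2 ht2) (add_nonneg (sq_nonneg p.1) (sq_nonneg p.2)),
    sq_nonneg p.1, sq_nonneg p.2]

lemma dotp_symm_of_closed {A : ℝ × ℝ → ℝ × ℝ} {q : ℝ × ℝ}
    (h : (fderiv ℝ A q (0, 1)).1 = (fderiv ℝ A q (1, 0)).2) (u v : ℝ × ℝ) :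
    dotp (fderiv ℝ A q u) v = dotp (fderiv ℝ A q v) u := by
  have e : ∀ w : ℝ × ℝ, fderiv ℝ A q w
      = w.1 • fderiv ℝ A q (1, 0) + w.2 • fderiv ℝ A q (0, 1) := by
    intro w
    have hw : w = w.1 • ((1:ℝ), (0:ℝ)) + w.2 • ((0:ℝ), (1:ℝ)) := by simp [Prod.ext_iff]
    conv_lhs => rw [hw]
    rw [map_add, (fderiv ℝ A q).map_smul, (fderiv ℝ A q).map_smul]
  rw [e u, e v]
  simp only [dotp, Prod.fst_add, Prod.snd_add, Prod.smul_fst, Prod.smul_snd, smul_eq_mul]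
  linear_combination -(u.1 * v.2 - u.2 * v.1) * h

lemma continuousOn_dotp {α : Type*} [TopologicalSpace α] {f g : α → ℝ × ℝ} {s : Set α}
    (hf : ContinuousOn f s) (hg : ContinuousOn g s) :
    ContinuousOn (fun x => dotp (f x) (g x)) s :=
  ((continuous_fst.comp_continuousOn hf).mul (continuous_fst.comp_continuousOn hg)).add
    ((continuous_snd.comp_continuousOn hf).mul (continuous_snd.comp_continuousOn hg))

lemma Af_contDiffOn {f : ℝ × ℝ → ℝ × ℝ} {U : Set (ℝ × ℝ)}
    (hU : IsOpen U) (hf : ContDiffOn ℝ (⊤ : ℕ∞) f U) :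
    ContDiffOn ℝ 1 (Af f) U := by
  have hf' : ContDiffOn ℝ 1 (fderiv ℝ f) U := by
    apply hf.fderiv_of_isOpen hU
    decide
  have h1 : ContDiffOn ℝ 1 f U := hf.of_le (by decide)
  have hfst : ContDiffOn ℝ 1 (fun p : ℝ × ℝ => (f p).1) U := contDiff_fst.comp_contDiffOn h1
  have hsnd : ContDiffOn ℝ 1 (fun p : ℝ × ℝ => (f p).2) U := contDiff_snd.comp_contDiffOn h1
  have hD : ∀ w : ℝ × ℝ, ContDiffOn ℝ 1 (fun p => fderiv ℝ f p w) U :=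
    fun w => hf'.clm_apply contDiffOn_const
  have hD1 : ∀ w : ℝ × ℝ, ContDiffOn ℝ 1 (fun p => (fderiv ℝ f p w).1) U :=
    fun w => contDiff_fst.comp_contDiffOn (hD w)
  have hD2 : ∀ w : ℝ × ℝ, ContDiffOn ℝ 1 (fun p => (fderiv ℝ f p w).2) U :=
    fun w => contDiff_snd.comp_contDiffOn (hD w)
  apply ContDiffOn.prodMk
  · exact ((contDiffOn_const.mul ((hfst.mul (hD2 (1,0))).sub (hsnd.mul (hD1 (1,0))))).add
      (contDiffOn_const.mul (contDiff_snd.contDiffOn)))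
  · exact ((contDiffOn_const.mul ((hfst.mul (hD2 (0,1))).sub (hsnd.mul (hD1 (0,1))))).sub
      (contDiffOn_const.mul (contDiff_fst.contDiffOn)))

lemma Af_closed {f : ℝ × ℝ → ℝ × ℝ} {U : Set (ℝ × ℝ)}
    (hU : IsOpen U) (hf : ContDiffOn ℝ (⊤ : ℕ∞) f U) {p : ℝ × ℝ} (hp : p ∈ U)
    (hdet : (fderiv ℝ f p (1, 0)).1 * (fderiv ℝ f p (0, 1)).2
      - (fderiv ℝ f p (0, 1)).1 * (fderiv ℝ f p (1, 0)).2 = 1) :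
    (fderiv ℝ (Af f) p (0, 1)).1 = (fderiv ℝ (Af f) p (1, 0)).2 := by
  have hpU : U ∈ nhds p := hU.mem_nhds hp
  have hct : ContDiffAt ℝ (⊤ : ℕ∞) f p := hf.contDiffAt hpU
  have hsymm : ∀ v w : ℝ × ℝ, fderiv ℝ (fderiv ℝ f) p v w = fderiv ℝ (fderiv ℝ f) p w v := by
    have := hct.isSymmSndFDerivAt (n := (⊤ : ℕ∞)) (by simp; exact WithTop.coe_le_coe.2 le_top)
    exact this
  have hf' : ContDiffOn ℝ 1 (fderiv ℝ f) U := by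
    apply hf.fderiv_of_isOpen hU
    decide
  set B := fderiv ℝ (fderiv ℝ f) p with hB
  have hφ : HasFDerivAt (fderiv ℝ f) B p :=
    (hf'.differentiableOn one_ne_zero).differentiableAt hpU |>.hasFDerivAt
  have hfp : HasFDerivAt f (fderiv ℝ f p) p :=
    ((hf.differentiableOn (by decide)).differentiableAt hpU).hasFDerivAt
  have hfc : ∀ w : ℝ × ℝ, HasFDerivAt (fun q => fderiv ℝ f q w)
      ((ContinuousLinearMap.apply ℝ (ℝ × ℝ) w).comp B) p :=
    fun w => (ContinuousLinearMap.apply ℝ (ℝ × ℝ) w).hasFDerivAt.comp p hφ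
  have hfc1 : ∀ w : ℝ × ℝ, HasFDerivAt (fun q => (fderiv ℝ f q w).1)
      ((ContinuousLinearMap.fst ℝ ℝ ℝ).comp ((ContinuousLinearMap.apply ℝ (ℝ × ℝ) w).comp B)) p :=
    fun w => (ContinuousLinearMap.fst ℝ ℝ ℝ).hasFDerivAt.comp p (hfc w)
  have hfc2 : ∀ w : ℝ × ℝ, HasFDerivAt (fun q => (fderiv ℝ f q w).2)
      ((ContinuousLinearMap.snd ℝ ℝ ℝ).comp ((ContinuousLinearMap.apply ℝ (ℝ × ℝ) w).comp B)) p :=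
    fun w => (ContinuousLinearMap.snd ℝ ℝ ℝ).hasFDerivAt.comp p (hfc w)
  have hf1 : HasFDerivAt (fun q => (f q).1)
      ((ContinuousLinearMap.fst ℝ ℝ ℝ).comp (fderiv ℝ f p)) p :=
    (ContinuousLinearMap.fst ℝ ℝ ℝ).hasFDerivAt.comp p hfp
  have hf2 : HasFDerivAt (fun q => (f q).2)
      ((ContinuousLinearMap.snd ℝ ℝ ℝ).comp (fderiv ℝ f p)) p :=
    (ContinuousLinearMap.snd ℝ ℝ ℝ).hasFDerivAt.comp p hfp
  have hlin2 : HasFDerivAt (fun q : ℝ × ℝ => (1/2 : ℝ) * q.2)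
      ((1/2 : ℝ) • ContinuousLinearMap.snd ℝ ℝ ℝ) p := by
    simpa using ((ContinuousLinearMap.snd ℝ ℝ ℝ).hasFDerivAt (x := p)).const_mul (1/2 : ℝ)
  have hlin1 : HasFDerivAt (fun q : ℝ × ℝ => (1/2 : ℝ) * q.1)
      ((1/2 : ℝ) • ContinuousLinearMap.fst ℝ ℝ ℝ) p := by
    simpa using ((ContinuousLinearMap.fst ℝ ℝ ℝ).hasFDerivAt (x := p)).const_mul (1/2 : ℝ)
  have hP := (((hf1.mul (hfc2 (1,0))).sub (hf2.mul (hfc1 (1,0)))).const_mul (1/2 : ℝ)).add hlin2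
  have hQ := (((hf1.mul (hfc2 (0,1))).sub (hf2.mul (hfc1 (0,1)))).const_mul (1/2 : ℝ)).sub hlin1
  have hAf : HasFDerivAt (Af f) _ p := hP.prodMk hQ
  rw [hAf.fderiv]
  simp only [ContinuousLinearMap.prod_apply, ContinuousLinearMap.add_apply,
    ContinuousLinearMap.sub_apply, ContinuousLinearMap.smul_apply,
    ContinuousLinearMap.comp_apply, ContinuousLinearMap.apply_apply,
    ContinuousLinearMap.coe_fst', ContinuousLinearMap.coe_snd', smul_eq_mul]
  have h12 := hsymm (0,1) (1,0)
  have e1 : (B (0,1) (1,0)).1 = (B (1,0) (0,1)).1 := by rw [h12]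
  have e2 : (B (0,1) (1,0)).2 = (B (1,0) (0,1)).2 := by rw [h12]
  linear_combination (1/2) * (f p).1 * e2 - (1/2) * (f p).2 * e1 - hdet

/-- Fundamental lemma: the line integral of a closed C¹ 1-form `A` along a C¹ curve in
the disk equals the difference of the star-shaped primitive at the endpoints. -/
lemma line_int_eq (A : ℝ × ℝ → ℝ × ℝ) (U : Set (ℝ × ℝ)) (hU : IsOpen U) (hDU : Disk ⊆ U)
    (hA : ContDiffOn ℝ 1 A U)
    (hcl : ∀ q ∈ Disk, (fderiv ℝ A q (0, 1)).1 = (fderiv ℝ A q (1, 0)).2)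
    {a b : ℝ} (hab : a ≤ b) (c c' : ℝ → ℝ × ℝ)
    (hc : ∀ s ∈ Set.Icc a b, HasDerivAt c (c' s) s)
    (hc' : ContinuousOn c' (Set.Icc a b))
    (hmem : ∀ s ∈ Set.Icc a b, c s ∈ Disk) :
    ∫ s in a..b, dotp (A (c s)) (c' s)
      = (∫ t in (0:ℝ)..1, dotp (A (t • c b)) (c b))
        - ∫ t in (0:ℝ)..1, dotp (A (t • c a)) (c a) := by
  have hAc : ContinuousOn A U := hA.continuousOn
  have hA' : ContinuousOn (fderiv ℝ A) U := hA.continuousOn_fderiv_of_isOpen hU le_rfl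
  have hdiff : ∀ q ∈ Disk, HasFDerivAt A (fderiv ℝ A q) q := fun q hq =>
    ((hA.differentiableOn one_ne_zero).differentiableAt (hU.mem_nhds (hDU hq))).hasFDerivAt
  have hcc : ContinuousOn c (Set.Icc a b) := fun s hs =>
    (hc s hs).continuousAt.continuousWithinAt
  set D2 : ℝ → ℝ → ℝ := fun s t =>
    dotp (A (t • c s)) (c' s) + t * dotp (fderiv ℝ A (t • c s) (c s)) (c' s) with hD2
  have hmem2 : ∀ s ∈ Set.Icc a b, ∀ t ∈ Set.Icc (0:ℝ) 1, t • c s ∈ Disk := fun s hs t ht =>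
    smul_mem_Disk (hmem s hs) ht
  have hD2cont : ContinuousOn (fun q : ℝ × ℝ => D2 q.1 q.2)
      (Set.Icc a b ×ˢ Set.Icc (0:ℝ) 1) := by
    have hsc : ContinuousOn (fun q : ℝ × ℝ => q.2 • c q.1)
        (Set.Icc a b ×ˢ Set.Icc (0:ℝ) 1) := by
      exact (continuousOn_snd.smul (hcc.comp continuousOn_fst (fun q hq => hq.1)))
    have hmap : Set.MapsTo (fun q : ℝ × ℝ => q.2 • c q.1)
        (Set.Icc a b ×ˢ Set.Icc (0:ℝ) 1) U := fun q hq => hDU (hmem2 q.1 hq.1 q.2 hq.2)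
    have h1 : ContinuousOn (fun q : ℝ × ℝ => A (q.2 • c q.1))
        (Set.Icc a b ×ˢ Set.Icc (0:ℝ) 1) := hAc.comp hsc hmap
    have h2 : ContinuousOn (fun q : ℝ × ℝ => fderiv ℝ A (q.2 • c q.1))
        (Set.Icc a b ×ˢ Set.Icc (0:ℝ) 1) := hA'.comp hsc hmap
    have hcQ : ContinuousOn (fun q : ℝ × ℝ => c q.1)
        (Set.Icc a b ×ˢ Set.Icc (0:ℝ) 1) := hcc.comp continuousOn_fst (fun q hq => hq.1)
    have hc'Q : ContinuousOn (fun q : ℝ × ℝ => c' q.1)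
        (Set.Icc a b ×ˢ Set.Icc (0:ℝ) 1) := hc'.comp continuousOn_fst (fun q hq => hq.1)
    have h3 : ContinuousOn (fun q : ℝ × ℝ => (fderiv ℝ A (q.2 • c q.1)) (c q.1))
        (Set.Icc a b ×ˢ Set.Icc (0:ℝ) 1) := h2.clm_apply hcQ
    apply ContinuousOn.add
    · exact continuousOn_dotp h1 hc'Q
    · exact continuousOn_snd.mul (continuousOn_dotp h3 hc'Q)
  have step1 : ∀ s ∈ Set.Icc a b,
      (∫ t in (0:ℝ)..1, D2 s t) = dotp (A (c s)) (c' s) := by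
    intro s hs
    have hftc : ∀ t ∈ Set.uIcc (0:ℝ) 1,
        HasDerivAt (fun t => t * dotp (A (t • c s)) (c' s)) (D2 s t) t := by
      intro t ht
      rw [Set.uIcc_of_le zero_le_one] at ht
      have hq : t • c s ∈ Disk := hmem2 s hs t ht
      have hline : HasDerivAt (fun t : ℝ => t • c s) (c s) t := by
        simpa using (hasDerivAt_id t).smul_const (c s)
      have hAt : HasDerivAt (fun t => A (t • c s)) (fderiv ℝ A (t • c s) (c s)) t :=
        (hdiff _ hq).comp_hasDerivAt t hline
      have hdot : HasDerivAt (fun t => dotp (A (t • c s)) (c' s))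
          (dotp (fderiv ℝ A (t • c s) (c s)) (c' s)) t := by
        have := hasDerivAt_dotp hAt (hasDerivAt_const t (c' s))
        simpa [dotp] using this
      have := (hasDerivAt_id t).mul hdot
      convert this using 1
      · rfl
      · rfl
      · rfl
      simp only [hD2, smul_eq_mul, id_eq]
      ring
    have hint : IntervalIntegrable (D2 s) volume 0 1 := by
      apply ContinuousOn.intervalIntegrable
      rw [Set.uIcc_of_le zero_le_one]
      have : ContinuousOn (fun t : ℝ => ((s, t) : ℝ × ℝ)) (Set.Icc (0:ℝ) 1) :=
        (continuous_const.prodMk continuous_id).continuousOn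
      exact hD2cont.comp this (fun t ht => ⟨hs, ht⟩)
    have := intervalIntegral.integral_eq_sub_of_hasDerivAt hftc hint
    rw [this]
    simp
  have step2 : ∀ t ∈ Set.Icc (0:ℝ) 1,
      (∫ s in a..b, D2 s t) = dotp (A (t • c b)) (c b) - dotp (A (t • c a)) (c a) := by
    intro t ht
    have hftc : ∀ s ∈ Set.uIcc a b,
        HasDerivAt (fun s => dotp (A (t • c s)) (c s)) (D2 s t) s := by
      intro s hs
      rw [Set.uIcc_of_le hab] at hs
      have hq : t • c s ∈ Disk := hmem2 s hs t ht
      have hcs : HasDerivAt c (c' s) s := hc s hs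
      have hpt : HasDerivAt (fun s => t • c s) (t • c' s) s := hcs.const_smul t
      have hAt : HasDerivAt (fun s => A (t • c s)) (fderiv ℝ A (t • c s) (t • c' s)) s :=
        (hdiff _ hq).comp_hasDerivAt s hpt
      have := hasDerivAt_dotp hAt hcs
      convert this using 1
      have hsymm := dotp_symm_of_closed (hcl _ hq) (t • c' s) (c s)
      have ht2 : dotp (fderiv ℝ A (t • c s) (t • c' s)) (c s)
          = t * dotp (fderiv ℝ A (t • c s) (c s)) (c' s) := by
        rw [hsymm]
        simp [dotp, Prod.smul_fst, Prod.smul_snd]; ring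
      rw [hD2]
      dsimp only
      rw [ht2]; ring
    have hint : IntervalIntegrable (fun s => D2 s t) volume a b := by
      apply ContinuousOn.intervalIntegrable
      rw [Set.uIcc_of_le hab]
      have : ContinuousOn (fun s : ℝ => ((s, t) : ℝ × ℝ)) (Set.Icc a b) :=
        (continuous_id.prodMk continuous_const).continuousOn
      exact hD2cont.comp this (fun s hs => ⟨hs, ht⟩)
    have := intervalIntegral.integral_eq_sub_of_hasDerivAt hftc hint
    rw [this]
  have hInt : IntegrableOn (fun q : ℝ × ℝ => D2 q.1 q.2)
      (Set.Ioc a b ×ˢ Set.Ioc (0:ℝ) 1) (volume.prod volume) := by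
    apply (hD2cont.integrableOn_compact (isCompact_Icc.prod isCompact_Icc)).mono_set
    exact Set.prod_mono Set.Ioc_subset_Icc_self Set.Ioc_subset_Icc_self
  have fub : ∫ s in Set.Ioc a b, (∫ t in Set.Ioc (0:ℝ) 1, D2 s t)
      = ∫ t in Set.Ioc (0:ℝ) 1, (∫ s in Set.Ioc a b, D2 s t) := by
    apply integral_integral_swap
    rw [Measure.prod_restrict]
    exact hInt
  calc ∫ s in a..b, dotp (A (c s)) (c' s)
      = ∫ s in a..b, (∫ t in (0:ℝ)..1, D2 s t) := by
        apply intervalIntegral.integral_congr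
        intro s hs
        rw [Set.uIcc_of_le hab] at hs
        exact (step1 s hs).symm
    _ = ∫ s in Set.Ioc a b, (∫ t in Set.Ioc (0:ℝ) 1, D2 s t) := by
        rw [intervalIntegral.integral_of_le hab]
        apply setIntegral_congr_fun measurableSet_Ioc
        intro s _
        dsimp only
        rw [intervalIntegral.integral_of_le zero_le_one]
    _ = ∫ t in Set.Ioc (0:ℝ) 1, (∫ s in Set.Ioc a b, D2 s t) := fub
    _ = ∫ t in (0:ℝ)..1, (∫ s in a..b, D2 s t) := by
        rw [intervalIntegral.integral_of_le zero_le_one]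
        apply setIntegral_congr_fun measurableSet_Ioc
        intro t _
        dsimp only
        rw [intervalIntegral.integral_of_le hab]
    _ = ∫ t in (0:ℝ)..1, (dotp (A (t • c b)) (c b) - dotp (A (t • c a)) (c a)) := by
        apply intervalIntegral.integral_congr
        intro t ht
        rw [Set.uIcc_of_le zero_le_one] at ht
        exact step2 t ht
    _ = (∫ t in (0:ℝ)..1, dotp (A (t • c b)) (c b))
        - ∫ t in (0:ℝ)..1, dotp (A (t • c a)) (c a) := by
        have intg : ∀ p ∈ Disk, IntervalIntegrable (fun t => dotp (A (t • p)) p) volume 0 1 := by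
          intro p hp
          apply ContinuousOn.intervalIntegrable
          rw [Set.uIcc_of_le zero_le_one]
          have h1 : ContinuousOn (fun t : ℝ => A (t • p)) (Set.Icc (0:ℝ) 1) :=
            hAc.comp ((continuous_id.smul continuous_const).continuousOn)
              (fun t ht => hDU (smul_mem_Disk hp ht))
          exact continuousOn_dotp h1 continuousOn_const
        exact intervalIntegral.integral_sub (intg (c b) (hmem b ⟨hab, le_rfl⟩))
          (intg (c a) (hmem a ⟨le_rfl, hab⟩))

lemma line_int_eq' (A : ℝ × ℝ → ℝ × ℝ) (U : Set (ℝ × ℝ)) (hU : IsOpen U) (hDU : Disk ⊆ U)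
    (hA : ContDiffOn ℝ 1 A U)
    (hcl : ∀ q ∈ Disk, (fderiv ℝ A q (0, 1)).1 = (fderiv ℝ A q (1, 0)).2)
    (a b : ℝ) (c c' : ℝ → ℝ × ℝ)
    (hc : ∀ s ∈ Set.uIcc a b, HasDerivAt c (c' s) s)
    (hc' : ContinuousOn c' (Set.uIcc a b))
    (hmem : ∀ s ∈ Set.uIcc a b, c s ∈ Disk) :
    ∫ s in a..b, dotp (A (c s)) (c' s)
      = (∫ t in (0:ℝ)..1, dotp (A (t • c b)) (c b))
        - ∫ t in (0:ℝ)..1, dotp (A (t • c a)) (c a) := by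
  rcases le_total a b with hab | hab
  · rw [Set.uIcc_of_le hab] at hc hc' hmem
    exact line_int_eq A U hU hDU hA hcl hab c c' hc hc' hmem
  · rw [Set.uIcc_of_ge hab] at hc hc' hmem
    have := line_int_eq A U hU hDU hA hcl hab c c' hc hc' hmem
    rw [intervalIntegral.integral_symm, this]
    ring

lemma dotp_Af (f : ℝ × ℝ → ℝ × ℝ) (p v : ℝ × ℝ) :
    dotp (Af f p) v = (1 / 2) * ((f p).1 * (fderiv ℝ f p v).2
        - (f p).2 * (fderiv ℝ f p v).1) - (1 / 2) * (p.1 * v.2 - p.2 * v.1) := by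
  have e : fderiv ℝ f p v = v.1 • fderiv ℝ f p (1, 0) + v.2 • fderiv ℝ f p (0, 1) := by
    have hv : v = v.1 • ((1:ℝ), (0:ℝ)) + v.2 • ((0:ℝ), (1:ℝ)) := by simp [Prod.ext_iff]
    conv_lhs => rw [hv]
    rw [map_add, (fderiv ℝ f p).map_smul, (fderiv ℝ f p).map_smul]
  rw [e]
  simp only [dotp, Af, Prod.fst_add, Prod.snd_add, Prod.smul_fst, Prod.smul_snd, smul_eq_mul]
  ring

lemma tau_eq_Af (k : SympD) :
    tau k = ∫ t in (0:ℝ)..1,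
      dotp (Af k.toFun (t • (((1:ℝ), (0:ℝ)) : ℝ × ℝ))) (((1:ℝ), (0:ℝ)) : ℝ × ℝ) := by
  apply intervalIntegral.integral_congr
  intro t _
  have hsm : (t • (((1:ℝ), (0:ℝ)) : ℝ × ℝ)) = ((t, 0) : ℝ × ℝ) := by
    simp [Prod.ext_iff]
  simp only [hsm, dotp, Af]
  ring

lemma Af_comp (g h gh : SympD) (hcomp : IsComp g h gh) {p : ℝ × ℝ}
    (hp : p.1 ^ 2 + p.2 ^ 2 < 1) (v : ℝ × ℝ) :
    dotp (Af gh.toFun p) v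
      = dotp (Af g.toFun (h.toFun p)) (fderiv ℝ h.toFun p v) + dotp (Af h.toFun p) v := by
  obtain ⟨Ug, hUgo, hDUg, hgs⟩ := g.smooth
  obtain ⟨Uh, hUho, hDUh, hhs⟩ := h.smooth
  have hpD : p ∈ Disk := le_of_lt hp
  have hopen : IsOpen {q : ℝ × ℝ | q.1 ^ 2 + q.2 ^ 2 < 1} :=
    isOpen_lt (by fun_prop) continuous_const
  have hev : gh.toFun =ᶠ[nhds p] fun q => g.toFun (h.toFun q) := by
    filter_upwards [hopen.mem_nhds hp] with q hq using hcomp q (le_of_lt hq)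
  have hdh : DifferentiableAt ℝ h.toFun p :=
    (hhs.differentiableOn (by decide)).differentiableAt (hUho.mem_nhds (hDUh hpD))
  have hdg : DifferentiableAt ℝ g.toFun (h.toFun p) :=
    (hgs.differentiableOn (by decide)).differentiableAt (hUgo.mem_nhds (hDUg (h.mapsTo hpD)))
  have hfd : fderiv ℝ gh.toFun p = (fderiv ℝ g.toFun (h.toFun p)).comp (fderiv ℝ h.toFun p) := by
    rw [hev.fderiv_eq]
    exact fderiv_comp p hdg hdh
  rw [dotp_Af, dotp_Af, dotp_Af, hfd]
  have hval : gh.toFun p = g.toFun (h.toFun p) := hcomp p hpD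
  rw [hval]
  simp only [ContinuousLinearMap.comp_apply]
  ring


/-- for `g, h ∈ G` and lifts `φ, ψ` of the boundary restrictions,
`τ(g ∘ h) − τ(g) − τ(h) = ½(φ(ψ(0)) − φ(0) − ψ(0))`. -/

theorem delta_tau_formula (g h gh : SympD) (hg : FixesOrigin g) (hh : FixesOrigin h)
    (hcomp : IsComp g h gh) (phi psi : ℝ → ℝ)
    (hphi : IsLift g phi) (hpsi : IsLift h psi) :
    tau gh - tau g - tau h = (1 / 2) * (phi (psi 0) - phi 0 - psi 0) := by
  obtain ⟨Ug, hUgo, hDUg, hgs⟩ := g.smooth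
  obtain ⟨Uh, hUho, hDUh, hhs⟩ := h.smooth
  have hA_g : ContDiffOn ℝ 1 (Af g.toFun) Ug := Af_contDiffOn hUgo hgs
  have hcl_g : ∀ q ∈ Disk,
      (fderiv ℝ (Af g.toFun) q (0, 1)).1 = (fderiv ℝ (Af g.toFun) q (1, 0)).2 :=
    fun q hq => Af_closed hUgo hgs (hDUg hq) (g.areaPreserving q hq)
  -- the curve `c = h ∘ γ`
  set c : ℝ → ℝ × ℝ := fun s => h.toFun ((s, 0)) with hc_def
  set c' : ℝ → ℝ × ℝ := fun s => fderiv ℝ h.toFun ((s, 0)) (((1:ℝ), (0:ℝ))) with hc'_def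
  have hγmem : ∀ s ∈ Set.Icc (0:ℝ) 1, ((s, 0) : ℝ × ℝ) ∈ Disk := by
    intro s hs
    simp only [Disk, Set.mem_setOf_eq]
    nlinarith [hs.1, hs.2]
  have hc : ∀ s ∈ Set.Icc (0:ℝ) 1, HasDerivAt c (c' s) s := by
    intro s hs
    have hdh : HasFDerivAt h.toFun (fderiv ℝ h.toFun ((s, 0))) ((s, 0)) :=
      ((hhs.differentiableOn (by decide)).differentiableAt
        (hUho.mem_nhds (hDUh (hγmem s hs)))).hasFDerivAt
    have hγ : HasDerivAt (fun s : ℝ => ((s, 0) : ℝ × ℝ)) (((1:ℝ), (0:ℝ))) s :=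
      (hasDerivAt_id s).prodMk (hasDerivAt_const s 0)
    exact hdh.comp_hasDerivAt s hγ
  have hccont : ContinuousOn (fun s : ℝ => ((s, 0) : ℝ × ℝ)) (Set.Icc (0:ℝ) 1) :=
    (continuous_id.prodMk continuous_const).continuousOn
  have hc' : ContinuousOn c' (Set.Icc (0:ℝ) 1) := by
    have h1 : ContinuousOn (fderiv ℝ h.toFun) Uh :=
      hhs.continuousOn_fderiv_of_isOpen hUho (by decide)
    exact (h1.comp hccont (fun s hs => hDUh (hγmem s hs))).clm_apply continuousOn_const
  have hcmem : ∀ s ∈ Set.Icc (0:ℝ) 1, c s ∈ Disk := fun s hs => h.mapsTo (hγmem s hs)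
  -- integrability facts
  have hAgc : ContinuousOn (Af g.toFun) Ug := hA_g.continuousOn
  have intX : IntervalIntegrable (fun s => dotp (Af g.toFun (c s)) (c' s)) volume 0 1 := by
    apply ContinuousOn.intervalIntegrable
    rw [Set.uIcc_of_le zero_le_one]
    have hcIcc : ContinuousOn c (Set.Icc (0:ℝ) 1) := fun s hs =>
      (hc s hs).continuousAt.continuousWithinAt
    exact continuousOn_dotp (hAgc.comp hcIcc (fun s hs => hDUg (hcmem s hs))) hc'
  have intY : IntervalIntegrable
      (fun t => dotp (Af h.toFun (t • (((1:ℝ), (0:ℝ)) : ℝ × ℝ))) (((1:ℝ), (0:ℝ)) : ℝ × ℝ))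
      volume 0 1 := by
    apply ContinuousOn.intervalIntegrable
    rw [Set.uIcc_of_le zero_le_one]
    have h10 : (((1:ℝ), (0:ℝ)) : ℝ × ℝ) ∈ Disk := by norm_num [Disk]
    have h1 : ContinuousOn (fun t : ℝ => Af h.toFun (t • (((1:ℝ), (0:ℝ)) : ℝ × ℝ)))
        (Set.Icc (0:ℝ) 1) :=
      (Af_contDiffOn hUho hhs).continuousOn.comp
        ((continuous_id.smul continuous_const).continuousOn)
        (fun t ht => hDUh (smul_mem_Disk h10 ht))
    exact continuousOn_dotp h1 continuousOn_const
  -- splitting of `tau gh`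
  have split : tau gh = (∫ s in (0:ℝ)..1, dotp (Af g.toFun (c s)) (c' s)) + tau h := by
    rw [tau_eq_Af gh, tau_eq_Af h, ← intervalIntegral.integral_add intX intY]
    apply intervalIntegral.integral_congr_ae
    have hne1 : ∀ᵐ t : ℝ, t ≠ 1 := by
      refine (MeasureTheory.mem_ae_iff.mpr ?_)
      have : {t : ℝ | t ≠ 1}ᶜ = {(1:ℝ)} := by ext t; simp
      rw [this]
      exact Real.volume_singleton
    filter_upwards [hne1] with t ht1 htm
    rw [Set.uIoc_of_le zero_le_one] at htm
    have hlt : t < 1 := lt_of_le_of_ne htm.2 ht1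
    have hsm : (t • (((1:ℝ), (0:ℝ)) : ℝ × ℝ)) = ((t, 0) : ℝ × ℝ) := by simp [Prod.ext_iff]
    have hint : ((t, 0) : ℝ × ℝ).1 ^ 2 + ((t, 0) : ℝ × ℝ).2 ^ 2 < 1 := by
      simp only
      nlinarith [htm.1]
    calc dotp (Af gh.toFun (t • (((1:ℝ), (0:ℝ)) : ℝ × ℝ))) (((1:ℝ), (0:ℝ)) : ℝ × ℝ)
        = dotp (Af gh.toFun ((t, 0) : ℝ × ℝ)) (((1:ℝ), (0:ℝ)) : ℝ × ℝ) := by rw [hsm]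
      _ = dotp (Af g.toFun (h.toFun ((t, 0) : ℝ × ℝ)))
            (fderiv ℝ h.toFun ((t, 0) : ℝ × ℝ) (((1:ℝ), (0:ℝ)) : ℝ × ℝ))
          + dotp (Af h.toFun ((t, 0) : ℝ × ℝ)) (((1:ℝ), (0:ℝ)) : ℝ × ℝ) :=
          Af_comp g h gh hcomp hint _
      _ = dotp (Af g.toFun (c t)) (c' t)
          + dotp (Af h.toFun (t • (((1:ℝ), (0:ℝ)) : ℝ × ℝ))) (((1:ℝ), (0:ℝ)) : ℝ × ℝ) := by
          rw [hsm]
  -- fundamental lemma along `c`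
  have key : (∫ s in (0:ℝ)..1, dotp (Af g.toFun (c s)) (c' s))
      = (∫ t in (0:ℝ)..1, dotp (Af g.toFun (t • c 1)) (c 1))
        - ∫ t in (0:ℝ)..1, dotp (Af g.toFun (t • c 0)) (c 0) :=
    line_int_eq (Af g.toFun) Ug hUgo hDUg hA_g hcl_g zero_le_one c c' hc hc' hcmem
  have hc0 : c 0 = ((0:ℝ), (0:ℝ)) := hh
  have hF0 : (∫ t in (0:ℝ)..1, dotp (Af g.toFun (t • c 0)) (c 0)) = 0 := by
    rw [hc0]
    simp [dotp]
  have hc1 : c 1 = (Real.cos (psi 0), Real.sin (psi 0)) := by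
    have := hpsi.2.2 0
    simpa using this
  -- boundary curve
  have hbmem : ∀ θ : ℝ, ((Real.cos θ, Real.sin θ) : ℝ × ℝ) ∈ Disk := by
    intro θ
    simp only [Disk, Set.mem_setOf_eq]
    rw [Real.cos_sq_add_sin_sq]
  have hbder : ∀ θ : ℝ, HasDerivAt (fun θ : ℝ => ((Real.cos θ, Real.sin θ) : ℝ × ℝ))
      ((-Real.sin θ, Real.cos θ) : ℝ × ℝ) θ :=
    fun θ => (Real.hasDerivAt_cos θ).prodMk (Real.hasDerivAt_sin θ)
  have bkey : (∫ θ in (0:ℝ)..(psi 0),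
        dotp (Af g.toFun ((Real.cos θ, Real.sin θ) : ℝ × ℝ)) ((-Real.sin θ, Real.cos θ) : ℝ × ℝ))
      = (∫ t in (0:ℝ)..1, dotp (Af g.toFun
            (t • ((Real.cos (psi 0), Real.sin (psi 0)) : ℝ × ℝ)))
            ((Real.cos (psi 0), Real.sin (psi 0)) : ℝ × ℝ))
        - ∫ t in (0:ℝ)..1, dotp (Af g.toFun
            (t • ((Real.cos 0, Real.sin 0) : ℝ × ℝ))) ((Real.cos 0, Real.sin 0) : ℝ × ℝ) := by
    exact line_int_eq' (Af g.toFun) Ug hUgo hDUg hA_g hcl_g 0 (psi 0)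
      (fun θ => ((Real.cos θ, Real.sin θ) : ℝ × ℝ))
      (fun θ => ((-Real.sin θ, Real.cos θ) : ℝ × ℝ))
      (fun θ _ => hbder θ)
      (((Real.continuous_sin.neg).prodMk Real.continuous_cos).continuousOn)
      (fun θ _ => hbmem θ)
  have hcs0 : ((Real.cos 0, Real.sin 0) : ℝ × ℝ) = (((1:ℝ), (0:ℝ)) : ℝ × ℝ) := by
    norm_num
  -- boundary integrand
  have hbint : ∀ θ : ℝ,
      dotp (Af g.toFun ((Real.cos θ, Real.sin θ) : ℝ × ℝ)) ((-Real.sin θ, Real.cos θ) : ℝ × ℝ)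
        = 1 / 2 * deriv phi θ - 1 / 2 := by
    intro θ
    have hdg : HasFDerivAt g.toFun (fderiv ℝ g.toFun ((Real.cos θ, Real.sin θ) : ℝ × ℝ))
        ((Real.cos θ, Real.sin θ) : ℝ × ℝ) :=
      ((hgs.differentiableOn (by decide)).differentiableAt
        (hUgo.mem_nhds (hDUg (hbmem θ)))).hasFDerivAt
    have h1 : HasDerivAt (fun θ : ℝ => g.toFun ((Real.cos θ, Real.sin θ) : ℝ × ℝ))
        (fderiv ℝ g.toFun ((Real.cos θ, Real.sin θ) : ℝ × ℝ)
          ((-Real.sin θ, Real.cos θ) : ℝ × ℝ)) θ :=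
      hdg.comp_hasDerivAt θ (hbder θ)
    have hφd : HasDerivAt phi (deriv phi θ) θ :=
      ((hphi.1.differentiable (by decide)) θ).hasDerivAt
    have h2 : HasDerivAt (fun θ : ℝ => ((Real.cos (phi θ), Real.sin (phi θ)) : ℝ × ℝ))
        ((-Real.sin (phi θ) * deriv phi θ, Real.cos (phi θ) * deriv phi θ) : ℝ × ℝ) θ :=
      ((Real.hasDerivAt_cos (phi θ)).comp θ hφd).prodMk
        ((Real.hasDerivAt_sin (phi θ)).comp θ hφd)
    have h12 : (fun θ : ℝ => g.toFun ((Real.cos θ, Real.sin θ) : ℝ × ℝ))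
        = fun θ : ℝ => ((Real.cos (phi θ), Real.sin (phi θ)) : ℝ × ℝ) :=
      funext fun θ => hphi.2.2 θ
    have hEq : fderiv ℝ g.toFun ((Real.cos θ, Real.sin θ) : ℝ × ℝ)
          ((-Real.sin θ, Real.cos θ) : ℝ × ℝ)
        = ((-Real.sin (phi θ) * deriv phi θ, Real.cos (phi θ) * deriv phi θ) : ℝ × ℝ) := by
      apply HasDerivAt.unique _ h2
      rw [← h12]
      exact h1
    rw [dotp_Af, hEq, hphi.2.2 θ]
    have s1 := Real.sin_sq_add_cos_sq (phi θ)
    have s2 := Real.sin_sq_add_cos_sq θ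
    simp only
    linear_combination (1/2) * deriv phi θ * s1 - (1/2) * s2
  -- FTC for the lift
  have hftcφ : (∫ θ in (0:ℝ)..(psi 0), (1 / 2 * deriv phi θ - 1 / 2))
      = (1 / 2 * phi (psi 0) - 1 / 2 * psi 0) - (1 / 2 * phi 0 - 1 / 2 * 0) := by
    have hder : ∀ θ ∈ Set.uIcc (0:ℝ) (psi 0),
        HasDerivAt (fun θ => 1 / 2 * phi θ - 1 / 2 * θ) (1 / 2 * deriv phi θ - 1 / 2) θ := by
      intro θ _
      have h1 : HasDerivAt (fun θ => 1 / 2 * phi θ) (1 / 2 * deriv phi θ) θ :=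
        (((hphi.1.differentiable (by decide)) θ).hasDerivAt).const_mul (1/2 : ℝ)
      have h2 : HasDerivAt (fun θ : ℝ => 1 / 2 * θ) (1 / 2 : ℝ) θ := by
        simpa using (hasDerivAt_id θ).const_mul (1/2 : ℝ)
      exact h1.sub h2
    have hint : IntervalIntegrable (fun θ => 1 / 2 * deriv phi θ - 1 / 2) volume 0 (psi 0) :=
      ((continuous_const.mul (hphi.1.continuous_deriv (by decide))).sub
        continuous_const).intervalIntegrable 0 (psi 0)
    simpa using intervalIntegral.integral_eq_sub_of_hasDerivAt hder hint
  have hbcongr : (∫ θ in (0:ℝ)..(psi 0),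
      dotp (Af g.toFun ((Real.cos θ, Real.sin θ) : ℝ × ℝ)) ((-Real.sin θ, Real.cos θ) : ℝ × ℝ))
      = ∫ θ in (0:ℝ)..(psi 0), (1 / 2 * deriv phi θ - 1 / 2) :=
    intervalIntegral.integral_congr (fun θ _ => hbint θ)
  -- assemble everything
  have htaug : tau g = ∫ t in (0:ℝ)..1,
      dotp (Af g.toFun (t • ((Real.cos 0, Real.sin 0) : ℝ × ℝ)))
        ((Real.cos 0, Real.sin 0) : ℝ × ℝ) := by
    rw [hcs0]
    exact tau_eq_Af g
  rw [split, key, hF0, hc1, htaug]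
  rw [hbcongr, hftcφ] at bkey
  linarith [bkey]
end
end

section
/- For all g ∈ G and h ∈ G_rel, τ(g ∘ h) = τ(g) + flux_ℝ(h) and τ(h ∘ g) = τ(g) + flux_ℝ(h). -/
open MeasureTheory

noncomputable section

section TauAuxSec
set_option maxHeartbeats 2000000
open Set
namespace TauAux

def dot (u v : ℝ × ℝ) : ℝ := u.1 * v.1 + u.2 * v.2

def aOf (f : ℝ × ℝ → ℝ × ℝ) : ℝ × ℝ → ℝ × ℝ := fun p =>
  ((1/2) * ((f p).1 * (fderiv ℝ f p (1, 0)).2 - (f p).2 * (fderiv ℝ f p (1, 0)).1) + p.2 / 2,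
   (1/2) * ((f p).1 * (fderiv ℝ f p (0, 1)).2 - (f p).2 * (fderiv ℝ f p (0, 1)).1) - p.1 / 2)

lemma dot_zero (x : ℝ × ℝ) : dot x 0 = 0 := by simp [dot]

lemma clm_expand {α : Type*} [NormedAddCommGroup α] [NormedSpace ℝ α]
    (L : ℝ × ℝ →L[ℝ] α) (v : ℝ × ℝ) : L v = v.1 • L (1, 0) + v.2 • L (0, 1) := by
  have hv : v = v.1 • ((1:ℝ), (0:ℝ)) + v.2 • ((0:ℝ), (1:ℝ)) := by
    simp [Prod.ext_iff]
  conv_lhs => rw [hv]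
  rw [map_add, _root_.map_smul, _root_.map_smul]

lemma dot_aOf (f : ℝ × ℝ → ℝ × ℝ) (p v : ℝ × ℝ) :
    dot (aOf f p) v =
      (1/2) * ((f p).1 * (fderiv ℝ f p v).2 - (f p).2 * (fderiv ℝ f p v).1)
        - (1/2) * (p.1 * v.2 - p.2 * v.1) := by
  rw [clm_expand (fderiv ℝ f p) v]
  simp [dot, aOf]
  ring

lemma disk_convex {p q : ℝ × ℝ} (hp : p ∈ Disk) (hq : q ∈ Disk) {s : ℝ}
    (h0 : 0 ≤ s) (h1 : s ≤ 1) : p + s • (q - p) ∈ Disk := by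
  simp only [Disk, Set.mem_setOf_eq] at *
  have h : (p + s • (q - p)).1 = p.1 + s * (q.1 - p.1) := rfl
  have h2 : (p + s • (q - p)).2 = p.2 + s * (q.2 - p.2) := rfl
  rw [h, h2]
  nlinarith [sq_nonneg (p.1 * q.2 - p.2 * q.1), sq_nonneg (p.1 - q.1), sq_nonneg (p.2 - q.2),
    mul_nonneg h0 (sub_nonneg.2 h1), sq_nonneg s, sq_nonneg (1 - s)]


lemma pd_contDiffOn {f : ℝ × ℝ → ℝ × ℝ} {U : Set (ℝ × ℝ)} (hU : IsOpen U)
    (hf : ContDiffOn ℝ (⊤ : ℕ∞) f U) (v : ℝ × ℝ) :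
    ContDiffOn ℝ (⊤ : ℕ∞) (fun p => fderiv ℝ f p v) U := by
  have h1 : ContDiffOn ℝ (⊤ : ℕ∞) (fderiv ℝ f) U := hf.fderiv_of_isOpen (m := (⊤ : ℕ∞)) hU (by simp)
  exact h1.clm_apply contDiffOn_const

lemma aOf_contDiffOn {f : ℝ × ℝ → ℝ × ℝ} {U : Set (ℝ × ℝ)} (hU : IsOpen U)
    (hf : ContDiffOn ℝ (⊤ : ℕ∞) f U) : ContDiffOn ℝ (⊤ : ℕ∞) (aOf f) U := by
  have h1 := pd_contDiffOn hU hf ((1:ℝ), (0:ℝ))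
  have h2 := pd_contDiffOn hU hf ((0:ℝ), (1:ℝ))
  have hf1 : ContDiffOn ℝ (⊤ : ℕ∞) (fun p => (f p).1) U := contDiff_fst.comp_contDiffOn hf
  have hf2 : ContDiffOn ℝ (⊤ : ℕ∞) (fun p => (f p).2) U := contDiff_snd.comp_contDiffOn hf
  apply ContDiffOn.prodMk
  · exact (contDiffOn_const.mul ((hf1.mul (contDiff_snd.comp_contDiffOn h1)).sub
      (hf2.mul (contDiff_fst.comp_contDiffOn h1)))).add
      ((contDiff_snd.contDiffOn).div_const 2)
  · exact (contDiffOn_const.mul ((hf1.mul (contDiff_snd.comp_contDiffOn h2)).sub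
      (hf2.mul (contDiff_fst.comp_contDiffOn h2)))).sub
      ((contDiff_fst.contDiffOn).div_const 2)

lemma aOf_closed {f : ℝ × ℝ → ℝ × ℝ} {U : Set (ℝ × ℝ)} (hU : IsOpen U)
    (hf : ContDiffOn ℝ (⊤ : ℕ∞) f U) {p : ℝ × ℝ} (hp : p ∈ U)
    (harea : (fderiv ℝ f p (1, 0)).1 * (fderiv ℝ f p (0, 1)).2
      - (fderiv ℝ f p (0, 1)).1 * (fderiv ℝ f p (1, 0)).2 = 1) :
    (fderiv ℝ (aOf f) p (1, 0)).2 = (fderiv ℝ (aOf f) p (0, 1)).1 := by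
  set F := fderiv ℝ f with hFdef
  have hnb : U ∈ nhds p := hU.mem_nhds hp
  have hFc : ContDiffOn ℝ (⊤ : ℕ∞) F U := hf.fderiv_of_isOpen (m := (⊤ : ℕ∞)) hU (by simp)
  have hFdiff : DifferentiableAt ℝ F p :=
    (hFc.contDiffAt hnb).differentiableAt (by simp)
  set F' := fderiv ℝ F p with hF'def
  have hx : HasFDerivAt F F' p := hFdiff.hasFDerivAt
  have hev : ∀ᶠ y in nhds p, HasFDerivAt f (F y) y := by
    filter_upwards [hU.mem_nhds hp] with y hy
    exact ((hf.contDiffAt (hU.mem_nhds hy)).differentiableAt (by simp)).hasFDerivAt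
  have hsymm : ∀ v w : ℝ × ℝ, F' v w = F' w v :=
    fun v w => second_derivative_symmetric_of_eventually hev hx v w
  have hdf : HasFDerivAt f (F p) p := ((hf.contDiffAt hnb).differentiableAt (by simp)).hasFDerivAt
  have hf1 : HasFDerivAt (fun q => (f q).1) ((ContinuousLinearMap.fst ℝ ℝ ℝ).comp (F p)) p :=
    hdf.fst
  have hf2 : HasFDerivAt (fun q => (f q).2) ((ContinuousLinearMap.snd ℝ ℝ ℝ).comp (F p)) p :=
    hdf.snd
  have hv : ∀ v : ℝ × ℝ, HasFDerivAt (fun q => F q v)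
      ((ContinuousLinearMap.apply ℝ (ℝ × ℝ) v).comp F') p :=
    fun v => (ContinuousLinearMap.apply ℝ (ℝ × ℝ) v).hasFDerivAt.comp p hx
  have hv1 : ∀ v : ℝ × ℝ, HasFDerivAt (fun q => (F q v).1)
      ((ContinuousLinearMap.fst ℝ ℝ ℝ).comp
        ((ContinuousLinearMap.apply ℝ (ℝ × ℝ) v).comp F')) p := fun v => (hv v).fst
  have hv2 : ∀ v : ℝ × ℝ, HasFDerivAt (fun q => (F q v).2)
      ((ContinuousLinearMap.snd ℝ ℝ ℝ).comp
        ((ContinuousLinearMap.apply ℝ (ℝ × ℝ) v).comp F')) p := fun v => (hv v).snd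
  have hA1 := ((((hf1.mul (hv2 (1,0))).sub (hf2.mul (hv1 (1,0)))).const_mul (1/2:ℝ)).add
    ((hasFDerivAt_snd (𝕜 := ℝ) (E := ℝ) (F := ℝ) (p := p)).mul_const (2:ℝ)⁻¹))
  have hA2 := ((((hf1.mul (hv2 (0,1))).sub (hf2.mul (hv1 (0,1)))).const_mul (1/2:ℝ)).sub
    ((hasFDerivAt_fst (𝕜 := ℝ) (E := ℝ) (F := ℝ) (p := p)).mul_const (2:ℝ)⁻¹))
  have hA : HasFDerivAt (aOf f) _ p := hA1.prodMk hA2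
  rw [hA.fderiv]
  have hs1 : (F' (1,0) (0,1)).1 = (F' (0,1) (1,0)).1 := by rw [hsymm]
  have hs2 : (F' (1,0) (0,1)).2 = (F' (0,1) (1,0)).2 := by rw [hsymm]
  simp only [ContinuousLinearMap.prod_apply, ContinuousLinearMap.add_apply,
    ContinuousLinearMap.sub_apply, ContinuousLinearMap.smul_apply,
    ContinuousLinearMap.comp_apply, ContinuousLinearMap.coe_fst', ContinuousLinearMap.coe_snd',
    ContinuousLinearMap.apply_apply, ContinuousLinearMap.coe_smul',
    Pi.smul_apply, smul_eq_mul]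
  ring_nf
  ring_nf at harea hs1 hs2
  linear_combination harea + (1/2) * (f p).1 * hs2 - (1/2) * (f p).2 * hs1

lemma dot_fderiv_swap {a : ℝ × ℝ → ℝ × ℝ} {x : ℝ × ℝ}
    (h : (fderiv ℝ a x (1, 0)).2 = (fderiv ℝ a x (0, 1)).1) (u v : ℝ × ℝ) :
    dot (fderiv ℝ a x u) v = dot (fderiv ℝ a x v) u := by
  rw [clm_expand (fderiv ℝ a x) u, clm_expand (fderiv ℝ a x) v]
  simp only [dot, Prod.fst_add, Prod.snd_add, Prod.smul_fst, Prod.smul_snd, smul_eq_mul]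
  linear_combination (u.1 * v.2 - u.2 * v.1) * h

lemma hasDerivAt_dot {F G : ℝ → ℝ × ℝ} {vF vG : ℝ × ℝ} {x : ℝ}
    (hF : HasDerivAt F vF x) (hG : HasDerivAt G vG x) :
    HasDerivAt (fun u => dot (F u) (G u)) (dot vF (G x) + dot (F x) vG) x := by
  have hF1 : HasDerivAt (fun u => (F u).1) vF.1 x :=
    (ContinuousLinearMap.fst ℝ ℝ ℝ).hasFDerivAt.comp_hasDerivAt x hF
  have hF2 : HasDerivAt (fun u => (F u).2) vF.2 x :=
    (ContinuousLinearMap.snd ℝ ℝ ℝ).hasFDerivAt.comp_hasDerivAt x hF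
  have hG1 : HasDerivAt (fun u => (G u).1) vG.1 x :=
    (ContinuousLinearMap.fst ℝ ℝ ℝ).hasFDerivAt.comp_hasDerivAt x hG
  have hG2 : HasDerivAt (fun u => (G u).2) vG.2 x :=
    (ContinuousLinearMap.snd ℝ ℝ ℝ).hasFDerivAt.comp_hasDerivAt x hG
  have h := (hF1.mul hG1).add (hF2.mul hG2)
  exact (h.congr_deriv (by simp [dot]; ring) : HasDerivAt (fun u => dot (F u) (G u)) (dot vF (G x) + dot (F x) vG) x)

lemma continuousOn_dot {α : Type*} [TopologicalSpace α] {F G : α → ℝ × ℝ} {s : Set α}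
    (hF : ContinuousOn F s) (hG : ContinuousOn G s) :
    ContinuousOn (fun x => dot (F x) (G x)) s := by
  have : Continuous (fun z : (ℝ × ℝ) × (ℝ × ℝ) => dot z.1 z.2) := by
    simp only [dot]; fun_prop
  exact this.comp_continuousOn (hF.prodMk hG)

lemma homotopy_integral
    (a : ℝ × ℝ → ℝ × ℝ) (U : Set (ℝ × ℝ)) (hU : IsOpen U) (hDU : Disk ⊆ U)
    (ha : ContDiffOn ℝ (⊤ : ℕ∞) a U)
    (hcl : ∀ p ∈ Disk, (fderiv ℝ a p (1, 0)).2 = (fderiv ℝ a p (0, 1)).1)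
    (c₀ c₁ : ℝ → ℝ × ℝ) (I : Set ℝ) (hI : IsOpen I) (hII : Icc (0:ℝ) 1 ⊆ I)
    (hc₀ : ContDiffOn ℝ (⊤ : ℕ∞) c₀ I) (hc₁ : ContDiffOn ℝ (⊤ : ℕ∞) c₁ I)
    (hmem : ∀ s ∈ Icc (0:ℝ) 1, ∀ t ∈ Icc (0:ℝ) 1, c₀ t + s • (c₁ t - c₀ t) ∈ Disk) :
    (∫ t in (0:ℝ)..1, dot (a (c₁ t)) (deriv c₁ t))
      - (∫ t in (0:ℝ)..1, dot (a (c₀ t)) (deriv c₀ t))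
    = ∫ s in (0:ℝ)..1,
        (dot (a (c₀ 1 + s • (c₁ 1 - c₀ 1))) (c₁ 1 - c₀ 1)
          - dot (a (c₀ 0 + s • (c₁ 0 - c₀ 0))) (c₁ 0 - c₀ 0)) := by
  set H : ℝ → ℝ → ℝ × ℝ := fun s t => c₀ t + s • (c₁ t - c₀ t) with hHdef
  set Dt : ℝ → ℝ → ℝ × ℝ := fun s t => deriv c₀ t + s • (deriv c₁ t - deriv c₀ t) with hDtdef
  set P : ℝ → ℝ → ℝ := fun s t => dot (a (H s t)) (Dt s t) with hPdef
  set Q : ℝ → ℝ → ℝ := fun s t => dot (a (H s t)) (c₁ t - c₀ t) with hQdef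
  set R : ℝ → ℝ → ℝ := fun s t =>
    dot (fderiv ℝ a (H s t) (Dt s t)) (c₁ t - c₀ t)
      + dot (a (H s t)) (deriv c₁ t - deriv c₀ t) with hRdef
  -- basic facts
  have hdc : ∀ (c : ℝ → ℝ × ℝ), ContDiffOn ℝ (⊤ : ℕ∞) c I → ∀ t ∈ I,
      HasDerivAt c (deriv c t) t := by
    intro c hc t ht
    exact ((hc.contDiffAt (hI.mem_nhds ht)).differentiableAt (by simp)).hasDerivAt
  have hHU : ∀ s ∈ Icc (0:ℝ) 1, ∀ t ∈ Icc (0:ℝ) 1, H s t ∈ U :=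
    fun s hs t ht => hDU (hmem s hs t ht)
  have haD : ∀ x ∈ U, HasFDerivAt a (fderiv ℝ a x) x := fun x hx =>
    ((ha.contDiffAt (hU.mem_nhds hx)).differentiableAt (by simp)).hasFDerivAt
  -- Claim 1 : derivative of P in s
  have claim1 : ∀ s ∈ Icc (0:ℝ) 1, ∀ t ∈ Icc (0:ℝ) 1,
      HasDerivAt (fun u => P u t) (R s t) s := by
    intro s hs t ht
    have hx : H s t ∈ U := hHU s hs t ht
    have hxD : H s t ∈ Disk := hmem s hs t ht
    have hcurve : HasDerivAt (fun u => H u t) (c₁ t - c₀ t) s := by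
      have := ((hasDerivAt_id s).smul_const (c₁ t - c₀ t)).const_add (c₀ t)
      rwa [one_smul] at this
    have hDt : HasDerivAt (fun u => Dt u t) (deriv c₁ t - deriv c₀ t) s := by
      have := ((hasDerivAt_id s).smul_const (deriv c₁ t - deriv c₀ t)).const_add (deriv c₀ t)
      rwa [one_smul] at this
    have hcomp : HasDerivAt (fun u => a (H u t)) (fderiv ℝ a (H s t) (c₁ t - c₀ t)) s :=
      (haD _ hx).comp_hasDerivAt s hcurve
    have h := hasDerivAt_dot hcomp hDt
    have heq : R s t = dot (fderiv ℝ a (H s t) (c₁ t - c₀ t)) (Dt s t)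
        + dot (a (H s t)) (deriv c₁ t - deriv c₀ t) := by
      rw [hRdef]
      dsimp only
      rw [dot_fderiv_swap (hcl _ hxD)]
    rw [heq]
    exact h
  -- Claim 2 : derivative of Q in t
  have claim2 : ∀ s ∈ Icc (0:ℝ) 1, ∀ t ∈ Icc (0:ℝ) 1,
      HasDerivAt (fun u => Q s u) (R s t) t := by
    intro s hs t ht
    have htI : t ∈ I := hII ht
    have hx : H s t ∈ U := hHU s hs t ht
    have hc0t := hdc c₀ hc₀ t htI
    have hc1t := hdc c₁ hc₁ t htI
    have hcurve : HasDerivAt (fun u => H s u) (Dt s t) t :=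
      hc0t.add ((hc1t.sub hc0t).const_smul s)
    have hE : HasDerivAt (fun u => c₁ u - c₀ u) (deriv c₁ t - deriv c₀ t) t := hc1t.sub hc0t
    have h := hasDerivAt_dot ((haD _ hx).comp_hasDerivAt t hcurve) hE
    exact h
  -- continuity
  have hacont : ContinuousOn a U := ha.continuousOn
  have hfdcont : ContinuousOn (fderiv ℝ a) U := ha.continuousOn_fderiv_of_isOpen hU (by simp)
  have hccont : ∀ (c : ℝ → ℝ × ℝ), ContDiffOn ℝ (⊤ : ℕ∞) c I → ContinuousOn (deriv c) I :=
    fun c hc => hc.continuousOn_deriv_of_isOpen hI (by simp)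
  set S : Set (ℝ × ℝ) := Icc (0:ℝ) 1 ×ˢ Icc (0:ℝ) 1 with hSdef
  have hmapI : ∀ z ∈ S, z.2 ∈ I := fun z hz => hII hz.2
  have h0S : ContinuousOn (fun z : ℝ × ℝ => c₀ z.2) S :=
    hc₀.continuousOn.comp continuous_snd.continuousOn hmapI
  have h1S : ContinuousOn (fun z : ℝ × ℝ => c₁ z.2) S :=
    hc₁.continuousOn.comp continuous_snd.continuousOn hmapI
  have hd0S : ContinuousOn (fun z : ℝ × ℝ => deriv c₀ z.2) S :=
    (hccont c₀ hc₀).comp continuous_snd.continuousOn hmapI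
  have hd1S : ContinuousOn (fun z : ℝ × ℝ => deriv c₁ z.2) S :=
    (hccont c₁ hc₁).comp continuous_snd.continuousOn hmapI
  have hHS : ContinuousOn (fun z : ℝ × ℝ => H z.1 z.2) S :=
    h0S.add (continuous_fst.continuousOn.smul (h1S.sub h0S))
  have hDtS : ContinuousOn (fun z : ℝ × ℝ => Dt z.1 z.2) S :=
    hd0S.add (continuous_fst.continuousOn.smul (hd1S.sub hd0S))
  have hHmapsU : ∀ z ∈ S, (H z.1 z.2) ∈ U := fun z hz => hHU _ hz.1 _ hz.2
  have haHS : ContinuousOn (fun z : ℝ × ℝ => a (H z.1 z.2)) S := hacont.comp hHS hHmapsU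
  have hfdHS : ContinuousOn (fun z : ℝ × ℝ => fderiv ℝ a (H z.1 z.2)) S :=
    hfdcont.comp hHS hHmapsU
  have hRS : ContinuousOn (fun z : ℝ × ℝ => R z.1 z.2) S :=
    (continuousOn_dot (hfdHS.clm_apply hDtS) (h1S.sub h0S)).add
      (continuousOn_dot haHS (hd1S.sub hd0S))
  have hRsec1 : ∀ s ∈ Icc (0:ℝ) 1, ContinuousOn (fun t => R s t) (Icc (0:ℝ) 1) := by
    intro s hs
    exact hRS.comp (Continuous.continuousOn (continuous_const.prodMk continuous_id))
      (fun t ht => Set.mk_mem_prod hs ht)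
  have hRsec2 : ∀ t ∈ Icc (0:ℝ) 1, ContinuousOn (fun s => R s t) (Icc (0:ℝ) 1) := by
    intro t ht
    exact hRS.comp (Continuous.continuousOn (continuous_id.prodMk continuous_const))
      (fun s hs => Set.mk_mem_prod hs ht)
  have key1 : ∀ s ∈ Icc (0:ℝ) 1, (∫ t in (0:ℝ)..1, R s t) = Q s 1 - Q s 0 := by
    intro s hs
    refine intervalIntegral.integral_eq_sub_of_hasDerivAt (fun t ht => claim2 s hs t ?_) ?_
    · rwa [uIcc_of_le zero_le_one] at ht
    · apply ContinuousOn.intervalIntegrable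
      rw [uIcc_of_le zero_le_one]
      exact hRsec1 s hs
  have key2 : ∀ t ∈ Icc (0:ℝ) 1, (∫ s in (0:ℝ)..1, R s t) = P 1 t - P 0 t := by
    intro t ht
    refine intervalIntegral.integral_eq_sub_of_hasDerivAt (fun s hs => claim1 s ?_ t ht) ?_
    · rwa [uIcc_of_le zero_le_one] at hs
    · apply ContinuousOn.intervalIntegrable
      rw [uIcc_of_le zero_le_one]
      exact hRsec2 t ht
  have hRint : IntegrableOn (fun z : ℝ × ℝ => R z.1 z.2)
      (Ioc (0:ℝ) 1 ×ˢ Ioc (0:ℝ) 1) volume := by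
    apply (hRS.integrableOn_compact (isCompact_Icc.prod isCompact_Icc)).mono_set
    exact Set.prod_mono Ioc_subset_Icc_self Ioc_subset_Icc_self
  have swap : (∫ s in Ioc (0:ℝ) 1, ∫ t in Ioc (0:ℝ) 1, R s t)
      = ∫ t in Ioc (0:ℝ) 1, ∫ s in Ioc (0:ℝ) 1, R s t := by
    apply MeasureTheory.integral_integral_swap
    rw [Measure.prod_restrict, ← Measure.volume_eq_prod]
    exact hRint
  have hP1 : ∀ t : ℝ, P 1 t = dot (a (c₁ t)) (deriv c₁ t) := by
    intro t
    have h1 : c₀ t + (1:ℝ) • (c₁ t - c₀ t) = c₁ t := by rw [one_smul]; abel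
    have h2 : deriv c₀ t + (1:ℝ) • (deriv c₁ t - deriv c₀ t) = deriv c₁ t := by
      rw [one_smul]; abel
    show dot (a (c₀ t + (1:ℝ) • (c₁ t - c₀ t)))
      (deriv c₀ t + (1:ℝ) • (deriv c₁ t - deriv c₀ t)) = _
    rw [h1, h2]
  have hP0 : ∀ t : ℝ, P 0 t = dot (a (c₀ t)) (deriv c₀ t) := by
    intro t
    have h1 : c₀ t + (0:ℝ) • (c₁ t - c₀ t) = c₀ t := by rw [zero_smul]; abel
    have h2 : deriv c₀ t + (0:ℝ) • (deriv c₁ t - deriv c₀ t) = deriv c₀ t := by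
      rw [zero_smul]; abel
    show dot (a (c₀ t + (0:ℝ) • (c₁ t - c₀ t)))
      (deriv c₀ t + (0:ℝ) • (deriv c₁ t - deriv c₀ t)) = _
    rw [h1, h2]
  have hPcont : ∀ s ∈ Icc (0:ℝ) 1, ContinuousOn (fun t => P s t) (Icc (0:ℝ) 1) := by
    intro s hs
    exact (continuousOn_dot haHS hDtS).comp
      (Continuous.continuousOn (continuous_const.prodMk continuous_id))
      (fun t ht => Set.mk_mem_prod hs ht)
  have hP1int : IntervalIntegrable (fun t => P 1 t) volume 0 1 := by
    apply ContinuousOn.intervalIntegrable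
    rw [uIcc_of_le zero_le_one]
    exact hPcont 1 (by norm_num)
  have hP0int : IntervalIntegrable (fun t => P 0 t) volume 0 1 := by
    apply ContinuousOn.intervalIntegrable
    rw [uIcc_of_le zero_le_one]
    exact hPcont 0 (by norm_num)
  have e1 : (∫ t in (0:ℝ)..1, dot (a (c₁ t)) (deriv c₁ t)) = ∫ t in (0:ℝ)..1, P 1 t := by
    apply intervalIntegral.integral_congr
    intro t _
    exact (hP1 t).symm
  have e0 : (∫ t in (0:ℝ)..1, dot (a (c₀ t)) (deriv c₀ t)) = ∫ t in (0:ℝ)..1, P 0 t := by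
    apply intervalIntegral.integral_congr
    intro t _
    exact (hP0 t).symm
  have e2 : (∫ t in (0:ℝ)..1, P 1 t) - (∫ t in (0:ℝ)..1, P 0 t)
      = ∫ t in (0:ℝ)..1, (P 1 t - P 0 t) := (intervalIntegral.integral_sub hP1int hP0int).symm
  have e3 : (∫ t in (0:ℝ)..1, (P 1 t - P 0 t)) = ∫ t in (0:ℝ)..1, (∫ s in (0:ℝ)..1, R s t) := by
    apply intervalIntegral.integral_congr
    intro t ht
    rw [uIcc_of_le zero_le_one] at ht
    exact (key2 t ht).symm
  have e4 : (∫ t in (0:ℝ)..1, (∫ s in (0:ℝ)..1, R s t))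
      = ∫ s in (0:ℝ)..1, (∫ t in (0:ℝ)..1, R s t) := by
    simp only [intervalIntegral.integral_of_le zero_le_one]
    exact swap.symm
  have e5 : (∫ s in (0:ℝ)..1, (∫ t in (0:ℝ)..1, R s t))
      = ∫ s in (0:ℝ)..1, (Q s 1 - Q s 0) := by
    apply intervalIntegral.integral_congr
    intro s hs
    rw [uIcc_of_le zero_le_one] at hs
    exact key1 s hs
  rw [e1, e0, e2, e3, e4, e5]

lemma bdry_of (g : SympD) : g.toFun (1, 0) ∈ Bdry := by
  obtain ⟨U, hU, hDU, hsm⟩ := g.smooth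
  obtain ⟨V, hV, hDV, hsmi⟩ := g.invSmooth
  set q := g.toFun (1, 0) with hq
  have h10 : ((1:ℝ), (0:ℝ)) ∈ Disk := by norm_num [Disk]
  have hqD : q ∈ Disk := g.mapsTo h10
  by_contra hb
  set O : Set (ℝ × ℝ) := {p | p.1 ^ 2 + p.2 ^ 2 < 1} with hOdef
  have hqO : q ∈ O := lt_of_le_of_ne (show q.1 ^ 2 + q.2 ^ 2 ≤ 1 from hqD) (show ¬ q.1 ^ 2 + q.2 ^ 2 = 1 from hb)
  have hO : IsOpen O := by
    have hcont : Continuous fun p : ℝ × ℝ => p.1 ^ 2 + p.2 ^ 2 := by fun_prop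
    exact isOpen_Iio.preimage hcont
  have hOD : O ⊆ Disk := fun p hp => le_of_lt (show p.1 ^ 2 + p.2 ^ 2 < 1 from hp)
  set W := U ∩ g.toFun ⁻¹' O with hWdef
  have hWopen : IsOpen W := hsm.continuousOn.isOpen_inter_preimage hU hO
  have h10W : ((1:ℝ), (0:ℝ)) ∈ W := ⟨hDU h10, hqO⟩
  set F := fun p => g.invFun (g.toFun p) with hFdef
  have hFsm : ContDiffOn ℝ (⊤ : ℕ∞) F W := by
    apply hsmi.comp (hsm.mono inter_subset_left)
    intro x hx
    exact hDV (hOD hx.2)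
  have hFid : ∀ x ∈ Disk, F x = x := g.leftInv
  have hfd : ∀ x ∈ O ∩ W, fderiv ℝ F x = ContinuousLinearMap.id ℝ (ℝ × ℝ) := by
    intro x hx
    have hev : F =ᶠ[nhds x] id :=
      Filter.eventuallyEq_of_mem ((hO.inter hWopen).mem_nhds hx)
        (fun y hy => hFid y (hOD hy.1))
    rw [hev.fderiv_eq, fderiv_id]
  have hcfd : ContinuousOn (fderiv ℝ F) W :=
    hFsm.continuousOn_fderiv_of_isOpen hWopen (by simp)
  have htend : Filter.Tendsto (fun n : ℕ => ((1 - 1/(n+1) : ℝ), (0:ℝ)))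
      Filter.atTop (nhds ((1:ℝ), (0:ℝ))) := by
    apply Filter.Tendsto.prodMk_nhds _ tendsto_const_nhds
    have : Filter.Tendsto (fun n : ℕ => (1/(n+1) : ℝ)) Filter.atTop (nhds 0) :=
      tendsto_one_div_add_atTop_nhds_zero_nat
    simpa using (tendsto_const_nhds (x := (1:ℝ))).sub this
  have hmemseq : ∀ᶠ (n : ℕ) in Filter.atTop, ((1 - 1/(n+1) : ℝ), (0:ℝ)) ∈ O ∩ W := by
    have hWev : ∀ᶠ (n : ℕ) in Filter.atTop, ((1 - 1/(n+1) : ℝ), (0:ℝ)) ∈ W :=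
      htend.eventually (hWopen.mem_nhds h10W)
    filter_upwards [hWev] with n hn
    refine ⟨?_, hn⟩
    have h1 : (0:ℝ) < 1/((n:ℝ)+1) := by positivity
    have h2 : (1/((n:ℝ)+1) : ℝ) ≤ 1 := by
      rw [div_le_one (by positivity)]
      linarith [Nat.cast_nonneg (α := ℝ) n]
    show (1 - 1/((n:ℝ)+1) : ℝ) ^ 2 + (0:ℝ) ^ 2 < 1
    nlinarith
  have h1lim : Filter.Tendsto (fun n : ℕ => fderiv ℝ F ((1 - 1/(n+1) : ℝ), (0:ℝ)))
      Filter.atTop (nhds (fderiv ℝ F ((1:ℝ), (0:ℝ)))) :=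
    ((hcfd.continuousAt (hWopen.mem_nhds h10W)).tendsto).comp htend
  have h2lim : Filter.Tendsto (fun n : ℕ => fderiv ℝ F ((1 - 1/(n+1) : ℝ), (0:ℝ)))
      Filter.atTop (nhds (ContinuousLinearMap.id ℝ (ℝ × ℝ))) := by
    apply Filter.Tendsto.congr' _ tendsto_const_nhds
    filter_upwards [hmemseq] with n hn
    exact (hfd _ hn).symm
  have hfd10 : fderiv ℝ F ((1:ℝ), (0:ℝ)) = ContinuousLinearMap.id ℝ (ℝ × ℝ) :=
    tendsto_nhds_unique h1lim h2lim
  have hsfd : HasStrictFDerivAt F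
      (↑(ContinuousLinearEquiv.refl ℝ (ℝ × ℝ)) : (ℝ × ℝ) →L[ℝ] (ℝ × ℝ)) ((1:ℝ), (0:ℝ)) := by
    have h := (hFsm.contDiffAt (hWopen.mem_nhds h10W)).hasStrictFDerivAt
      (n := (⊤ : ℕ∞)) (by simp)
    rw [hfd10] at h
    simpa using h
  have hmap : Filter.map F (nhds ((1:ℝ), (0:ℝ))) = nhds (F ((1:ℝ), (0:ℝ))) :=
    hsfd.map_nhds_eq_of_equiv
  have hF10 : F ((1:ℝ), (0:ℝ)) = ((1:ℝ), (0:ℝ)) := hFid _ h10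
  have himg : F '' W ∈ Filter.map F (nhds ((1:ℝ), (0:ℝ))) :=
    Filter.image_mem_map (hWopen.mem_nhds h10W)
  have hsub : F '' W ⊆ Disk := by
    rintro y ⟨x, hx, rfl⟩
    exact g.invMapsTo (hOD hx.2)
  have hDisk : Disk ∈ nhds ((1:ℝ), (0:ℝ)) := by
    rw [hmap, hF10] at himg
    exact Filter.mem_of_superset himg hsub
  obtain ⟨ε, hε, hball⟩ := Metric.mem_nhds_iff.1 hDisk
  have hmem : ((1 + ε/2 : ℝ), (0:ℝ)) ∈ Metric.ball ((1:ℝ), (0:ℝ)) ε := by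
    rw [Metric.mem_ball, Prod.dist_eq]
    show max (dist (1 + ε/2 : ℝ) 1) (dist (0:ℝ) 0) < ε
    rw [dist_self, Real.dist_eq, show (1 + ε/2 - 1 : ℝ) = ε/2 by ring,
      abs_of_nonneg (by linarith : (0:ℝ) ≤ ε/2)]
    apply max_lt <;> linarith
  have hcontr := hball hmem
  have : ((1 + ε/2 : ℝ)) ^ 2 + (0:ℝ) ^ 2 ≤ 1 := hcontr
  nlinarith

lemma deriv_line (t : ℝ) : deriv (fun u : ℝ => ((u : ℝ), (0:ℝ))) t = (1, 0) :=
  ((hasDerivAt_id t).prodMk (hasDerivAt_const t (0:ℝ))).deriv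

lemma tau_eq (g : SympD) :
    tau g = ∫ t in (0:ℝ)..1,
      dot (aOf g.toFun (t, 0)) (deriv (fun u : ℝ => ((u : ℝ), (0:ℝ))) t) := by
  apply intervalIntegral.integral_congr
  intro t _
  show (1 / 2) * ((g.toFun (t, 0)).1 * (fderiv ℝ g.toFun (t, 0) (1, 0)).2
      - (g.toFun (t, 0)).2 * (fderiv ℝ g.toFun (t, 0) (1, 0)).1)
    = dot (aOf g.toFun (t, 0)) (deriv (fun u : ℝ => ((u : ℝ), (0:ℝ))) t)
  rw [deriv_line, dot_aOf]
  norm_num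

lemma curve_hasDerivAt {f : ℝ × ℝ → ℝ × ℝ} {U : Set (ℝ × ℝ)} (hU : IsOpen U)
    (hsm : ContDiffOn ℝ (⊤ : ℕ∞) f U) {t : ℝ} (ht : (t, (0:ℝ)) ∈ U) :
    HasDerivAt (fun u : ℝ => f (u, 0)) (fderiv ℝ f (t, 0) (1, 0)) t := by
  have hd : HasFDerivAt f (fderiv ℝ f (t, 0)) (t, 0) :=
    ((hsm.contDiffAt (hU.mem_nhds ht)).differentiableAt (by simp)).hasFDerivAt
  exact hd.comp_hasDerivAt t ((hasDerivAt_id t).prodMk (hasDerivAt_const t (0:ℝ)))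

-- τ(gh) = ∫ (g*η - η) along h∘γ  +  τ(h)
lemma tau_comp_eq (g h gh : SympD) {Ug : Set (ℝ × ℝ)} (hUg : IsOpen Ug) (hDUg : Disk ⊆ Ug)
    (hsmg : ContDiffOn ℝ (⊤ : ℕ∞) g.toFun Ug)
    {Uh : Set (ℝ × ℝ)} (hUh : IsOpen Uh) (hDUh : Disk ⊆ Uh)
    (hsmh : ContDiffOn ℝ (⊤ : ℕ∞) h.toFun Uh)
    (hcomp : IsComp g h gh) :
    tau gh = (∫ t in (0:ℝ)..1,
        dot (aOf g.toFun (h.toFun (t, 0))) (deriv (fun u : ℝ => h.toFun (u, 0)) t)) + tau h := by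
  set O : Set (ℝ × ℝ) := {p | p.1 ^ 2 + p.2 ^ 2 < 1} with hOdef
  have hO : IsOpen O := by
    have hcont : Continuous fun p : ℝ × ℝ => p.1 ^ 2 + p.2 ^ 2 := by fun_prop
    exact isOpen_Iio.preimage hcont
  have hOD : O ⊆ Disk := fun p hp => le_of_lt (show p.1 ^ 2 + p.2 ^ 2 < 1 from hp)
  set c : ℝ → ℝ × ℝ := fun u => h.toFun (u, 0) with hcdef
  set A : ℝ → ℝ := fun t => dot (aOf g.toFun (c t)) (deriv c t) with hAdef
  set B : ℝ → ℝ := fun t => (1 / 2) *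
    ((h.toFun (t, 0)).1 * (fderiv ℝ h.toFun (t, 0) (1, 0)).2
      - (h.toFun (t, 0)).2 * (fderiv ℝ h.toFun (t, 0) (1, 0)).1) with hBdef
  -- pointwise identity on the open interval
  have hpt : ∀ t ∈ Ioo (0:ℝ) 1,
      (1 / 2) * ((gh.toFun (t, 0)).1 * (fderiv ℝ gh.toFun (t, 0) (1, 0)).2
        - (gh.toFun (t, 0)).2 * (fderiv ℝ gh.toFun (t, 0) (1, 0)).1) = A t + B t := by
    intro t ht
    have htO : ((t : ℝ), (0:ℝ)) ∈ O := by
      show t ^ 2 + (0:ℝ) ^ 2 < 1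
      obtain ⟨h0, h1⟩ := ht
      nlinarith
    have htD : ((t : ℝ), (0:ℝ)) ∈ Disk := hOD htO
    have hev : gh.toFun =ᶠ[nhds ((t : ℝ), (0:ℝ))] (fun p => g.toFun (h.toFun p)) :=
      Filter.eventuallyEq_of_mem (hO.mem_nhds htO) (fun p hp => hcomp p (hOD hp))
    have hval : gh.toFun (t, 0) = g.toFun (h.toFun (t, 0)) := hev.eq_of_nhds
    have hhdiff : DifferentiableAt ℝ h.toFun ((t : ℝ), (0:ℝ)) :=
      (hsmh.contDiffAt (hUh.mem_nhds (hDUh htD))).differentiableAt (by simp)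
    have hgdiff : DifferentiableAt ℝ g.toFun (h.toFun ((t : ℝ), (0:ℝ))) :=
      (hsmg.contDiffAt (hUg.mem_nhds (hDUg (h.mapsTo htD)))).differentiableAt (by simp)
    have hfd : fderiv ℝ gh.toFun ((t : ℝ), (0:ℝ))
        = (fderiv ℝ g.toFun (h.toFun (t, 0))).comp (fderiv ℝ h.toFun (t, 0)) := by
      rw [hev.fderiv_eq]
      exact fderiv_comp _ hgdiff hhdiff
    have hder : deriv c t = fderiv ℝ h.toFun (t, 0) (1, 0) :=
      (curve_hasDerivAt hUh hsmh (hDUh htD)).deriv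
    rw [hval, hfd, hAdef]
    dsimp only
    rw [dot_aOf, hder]
    show _ = _ - (1/2) * ((h.toFun (t,0)).1 * (fderiv ℝ h.toFun (t, 0) (1, 0)).2
      - (h.toFun (t,0)).2 * (fderiv ℝ h.toFun (t, 0) (1, 0)).1) + B t
    rw [hBdef]
    simp only [ContinuousLinearMap.comp_apply]
    ring
  -- a.e. version and integral split
  have hone : ∀ᵐ t : ℝ, t ≠ 1 := by
    have h1 : (volume ({(1:ℝ)} : Set ℝ)) = 0 := Real.volume_singleton
    exact (MeasureTheory.measure_eq_zero_iff_ae_notMem.mp h1).mono (fun x hx => hx)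
  have hae : ∀ᵐ t : ℝ, t ∈ Set.uIoc (0:ℝ) 1 →
      (1 / 2) * ((gh.toFun (t, 0)).1 * (fderiv ℝ gh.toFun (t, 0) (1, 0)).2
        - (gh.toFun (t, 0)).2 * (fderiv ℝ gh.toFun (t, 0) (1, 0)).1) = A t + B t := by
    filter_upwards [hone] with t ht1 htu
    rw [Set.uIoc_of_le zero_le_one] at htu
    exact hpt t ⟨htu.1, lt_of_le_of_ne htu.2 ht1⟩
  have hsplit : tau gh = ∫ t in (0:ℝ)..1, (A t + B t) :=
    intervalIntegral.integral_congr_ae hae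
  -- integrability
  set Ih : Set ℝ := {u : ℝ | ((u : ℝ), (0:ℝ)) ∈ Uh} with hIhdef
  have hIh : IsOpen Ih := hUh.preimage (by fun_prop : Continuous fun u : ℝ => ((u:ℝ), (0:ℝ)))
  have hIccIh : Icc (0:ℝ) 1 ⊆ Ih := by
    intro t ht
    apply hDUh
    show t ^ 2 + (0:ℝ) ^ 2 ≤ 1
    obtain ⟨h0, h1⟩ := ht
    nlinarith
  have hcsm : ContDiffOn ℝ (⊤ : ℕ∞) c Ih := by
    apply hsmh.comp ((contDiff_id.prodMk contDiff_const).contDiffOn)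
    intro u hu
    exact hu
  have hccont : ContinuousOn c (Icc (0:ℝ) 1) := (hcsm.continuousOn).mono hIccIh
  have hdcont : ContinuousOn (deriv c) (Icc (0:ℝ) 1) :=
    (hcsm.continuousOn_deriv_of_isOpen hIh (by simp)).mono hIccIh
  have hAcont : ContinuousOn A (Icc (0:ℝ) 1) := by
    apply continuousOn_dot _ hdcont
    have haOfc : ContinuousOn (aOf g.toFun) Ug := (aOf_contDiffOn hUg hsmg).continuousOn
    apply haOfc.comp hccont
    intro u hu
    exact hDUg (h.mapsTo (by
      show u ^ 2 + (0:ℝ) ^ 2 ≤ 1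
      obtain ⟨h0, h1⟩ := hu
      nlinarith))
  have hBcont : ContinuousOn B (Icc (0:ℝ) 1) := by
    have hk : ContinuousOn (fun t => dot (-(c t).2 / 2, (c t).1 / 2) (deriv c t))
        (Icc (0:ℝ) 1) := by
      apply continuousOn_dot _ hdcont
      apply ContinuousOn.prodMk
      · exact ((continuous_snd.comp_continuousOn hccont).neg).div_const 2
      · exact (continuous_fst.comp_continuousOn hccont).div_const 2
    apply hk.congr
    intro t ht
    have hder : deriv c t = fderiv ℝ h.toFun (t, 0) (1, 0) :=
      (curve_hasDerivAt hUh hsmh (hIccIh ht)).deriv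
    rw [hBdef]
    dsimp only
    rw [hder]
    show _ = dot (-(h.toFun (t,0)).2 / 2, (h.toFun (t,0)).1 / 2) _
    rw [dot]
    ring
  have hAint : IntervalIntegrable A volume 0 1 := by
    apply ContinuousOn.intervalIntegrable
    rwa [uIcc_of_le zero_le_one]
  have hBint : IntervalIntegrable B volume 0 1 := by
    apply ContinuousOn.intervalIntegrable
    rwa [uIcc_of_le zero_le_one]
  rw [hsplit, intervalIntegral.integral_add hAint hBint]
  rfl

lemma homotopy_eq
    (a : ℝ × ℝ → ℝ × ℝ) (U : Set (ℝ × ℝ)) (hU : IsOpen U) (hDU : Disk ⊆ U)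
    (ha : ContDiffOn ℝ (⊤ : ℕ∞) a U)
    (hcl : ∀ p ∈ Disk, (fderiv ℝ a p (1, 0)).2 = (fderiv ℝ a p (0, 1)).1)
    (c₀ c₁ : ℝ → ℝ × ℝ) (I : Set ℝ) (hI : IsOpen I) (hII : Icc (0:ℝ) 1 ⊆ I)
    (hc₀ : ContDiffOn ℝ (⊤ : ℕ∞) c₀ I) (hc₁ : ContDiffOn ℝ (⊤ : ℕ∞) c₁ I)
    (hmem : ∀ s ∈ Icc (0:ℝ) 1, ∀ t ∈ Icc (0:ℝ) 1, c₀ t + s • (c₁ t - c₀ t) ∈ Disk)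
    (he0 : c₁ 0 = c₀ 0) (he1 : c₁ 1 = c₀ 1) :
    (∫ t in (0:ℝ)..1, dot (a (c₁ t)) (deriv c₁ t))
      = ∫ t in (0:ℝ)..1, dot (a (c₀ t)) (deriv c₀ t) := by
  have h := homotopy_integral a U hU hDU ha hcl c₀ c₁ I hI hII hc₀ hc₁ hmem
  rw [he0, he1] at h
  simp only [sub_self, smul_zero, add_zero] at h
  have hz : ∀ x : ℝ × ℝ, dot x 0 = 0 := by
    intro x
    simp [dot]
  simp only [hz, sub_zero, sub_self, intervalIntegral.integral_zero] at h
  linarith [h]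

lemma rel_dot_aOf (h : SympD) (hrel : IsRel h) {Uh : Set (ℝ × ℝ)} (hUh : IsOpen Uh)
    (hDUh : Disk ⊆ Uh) (hsmh : ContDiffOn ℝ (⊤ : ℕ∞) h.toFun Uh) (θ : ℝ) :
    dot (aOf h.toFun (Real.cos θ, Real.sin θ)) (-Real.sin θ, Real.cos θ) = 0 := by
  have hpB : (Real.cos θ, Real.sin θ) ∈ Bdry := by
    show Real.cos θ ^ 2 + Real.sin θ ^ 2 = 1
    exact Real.cos_sq_add_sin_sq θ
  have hpD : (Real.cos θ, Real.sin θ) ∈ Disk :=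
    le_of_eq (show Real.cos θ ^ 2 + Real.sin θ ^ 2 = 1 from hpB)
  have hdiff : DifferentiableAt ℝ h.toFun (Real.cos θ, Real.sin θ) :=
    (hsmh.contDiffAt (hUh.mem_nhds (hDUh hpD))).differentiableAt (by simp)
  have hcirc : HasDerivAt (fun x : ℝ => (Real.cos x, Real.sin x))
      (-Real.sin θ, Real.cos θ) θ := (Real.hasDerivAt_cos θ).prodMk (Real.hasDerivAt_sin θ)
  have hD1 : HasDerivAt (fun x : ℝ => h.toFun (Real.cos x, Real.sin x))
      (fderiv ℝ h.toFun (Real.cos θ, Real.sin θ) (-Real.sin θ, Real.cos θ)) θ :=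
    hdiff.hasFDerivAt.comp_hasDerivAt θ hcirc
  have hfun : (fun x : ℝ => h.toFun (Real.cos x, Real.sin x))
      = fun x : ℝ => (Real.cos x, Real.sin x) := by
    funext x
    exact hrel _ (show Real.cos x ^ 2 + Real.sin x ^ 2 = 1 from Real.cos_sq_add_sin_sq x)
  rw [hfun] at hD1
  have huniq : fderiv ℝ h.toFun (Real.cos θ, Real.sin θ) (-Real.sin θ, Real.cos θ)
      = (-Real.sin θ, Real.cos θ) := hD1.unique hcirc
  rw [dot_aOf, huniq, hrel _ hpB]
  ring

lemma exists_angle {p : ℝ × ℝ} (hp : p ∈ Bdry) : ∃ θ : ℝ, p = (Real.cos θ, Real.sin θ) := by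
  have h : p.1 ^ 2 + p.2 ^ 2 = 1 := hp
  have h1 : -1 ≤ p.1 := by nlinarith
  have h2 : p.1 ≤ 1 := by nlinarith
  rcases le_or_gt 0 p.2 with hy | hy
  · refine ⟨Real.arccos p.1, ?_⟩
    have hc : Real.cos (Real.arccos p.1) = p.1 := Real.cos_arccos h1 h2
    have hs : Real.sin (Real.arccos p.1) = Real.sqrt (1 - p.1 ^ 2) := Real.sin_arccos p.1
    have hsq : Real.sqrt (1 - p.1 ^ 2) = p.2 := by
      rw [show 1 - p.1 ^ 2 = p.2 ^ 2 by nlinarith]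
      exact Real.sqrt_sq hy
    rw [Prod.ext_iff]
    exact ⟨hc.symm, by rw [hs, hsq]⟩
  · refine ⟨-Real.arccos p.1, ?_⟩
    have hc : Real.cos (-Real.arccos p.1) = p.1 := by
      rw [Real.cos_neg]
      exact Real.cos_arccos h1 h2
    have hs : Real.sin (-Real.arccos p.1) = -Real.sqrt (1 - p.1 ^ 2) := by
      rw [Real.sin_neg, Real.sin_arccos p.1]
    have hsq : Real.sqrt (1 - p.1 ^ 2) = -p.2 := by
      rw [show 1 - p.1 ^ 2 = (-p.2) ^ 2 by nlinarith]
      exact Real.sqrt_sq (by linarith)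
    rw [Prod.ext_iff]
    exact ⟨hc.symm, by rw [hs, hsq, neg_neg]⟩

end TauAux

end TauAuxSec

set_option maxHeartbeats 2000000 in
/-- for `g ∈ G` and `h ∈ G_rel`, `τ(g ∘ h) = τ(g) + flux_ℝ(h)` and
`τ(h ∘ g) = τ(g) + flux_ℝ(h)`. -/
theorem tau_comp_rel (g h gh hg' : SympD) (hg : FixesOrigin g) (hh : IsGrel h)
    (hcomp : IsComp g h gh) (hcomp' : IsComp h g hg') :
    tau gh = tau g + tau h ∧ tau hg' = tau g + tau h := by
  classical
  obtain ⟨hh0, hhrel⟩ := hh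
  obtain ⟨Ug, hUg, hDUg, hsmg⟩ := g.smooth
  obtain ⟨Uh, hUh, hDUh, hsmh⟩ := h.smooth
  have h10D : ((1:ℝ), (0:ℝ)) ∈ Disk := by norm_num [Disk]
  have h00D : ((0:ℝ), (0:ℝ)) ∈ Disk := by norm_num [Disk]
  have h10B : ((1:ℝ), (0:ℝ)) ∈ Bdry := by norm_num [Bdry]
  have hγD : ∀ t ∈ Set.Icc (0:ℝ) 1, ((t:ℝ), (0:ℝ)) ∈ Disk := by
    intro t ht
    show t ^ 2 + (0:ℝ) ^ 2 ≤ 1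
    obtain ⟨ha, hb⟩ := ht
    nlinarith
  have hlinesm : ContDiff ℝ (⊤ : ℕ∞) (fun u : ℝ => ((u : ℝ), (0:ℝ))) :=
    contDiff_id.prodMk contDiff_const
  have hclg : ∀ p ∈ Disk, (fderiv ℝ (TauAux.aOf g.toFun) p (1, 0)).2
      = (fderiv ℝ (TauAux.aOf g.toFun) p (0, 1)).1 :=
    fun p hp => TauAux.aOf_closed hUg hsmg (hDUg hp) (g.areaPreserving p hp)
  have hclh : ∀ p ∈ Disk, (fderiv ℝ (TauAux.aOf h.toFun) p (1, 0)).2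
      = (fderiv ℝ (TauAux.aOf h.toFun) p (0, 1)).1 :=
    fun p hp => TauAux.aOf_closed hUh hsmh (hDUh hp) (h.areaPreserving p hp)
  -- index sets for the two curves
  set Ih : Set ℝ := {u : ℝ | ((u : ℝ), (0:ℝ)) ∈ Uh} with hIhdef
  have hIh : IsOpen Ih := hUh.preimage (by fun_prop : Continuous fun u : ℝ => ((u:ℝ), (0:ℝ)))
  have hIccIh : Set.Icc (0:ℝ) 1 ⊆ Ih := fun t ht => hDUh (hγD t ht)
  have hchsm : ContDiffOn ℝ (⊤ : ℕ∞) (fun u : ℝ => h.toFun (u, 0)) Ih := by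
    apply hsmh.comp ((contDiff_id.prodMk contDiff_const).contDiffOn)
    intro u hu
    exact hu
  set Ig : Set ℝ := {u : ℝ | ((u : ℝ), (0:ℝ)) ∈ Ug} with hIgdef
  have hIg : IsOpen Ig := hUg.preimage (by fun_prop : Continuous fun u : ℝ => ((u:ℝ), (0:ℝ)))
  have hIccIg : Set.Icc (0:ℝ) 1 ⊆ Ig := fun t ht => hDUg (hγD t ht)
  have hcgsm : ContDiffOn ℝ (⊤ : ℕ∞) (fun u : ℝ => g.toFun (u, 0)) Ig := by
    apply hsmg.comp ((contDiff_id.prodMk contDiff_const).contDiffOn)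
    intro u hu
    exact hu
  ------------------------------------------------------------------ Part 1
  have e1 := TauAux.tau_comp_eq g h gh hUg hDUg hsmg hUh hDUh hsmh hcomp
  have hhom1 : (∫ t in (0:ℝ)..1, TauAux.dot (TauAux.aOf g.toFun (h.toFun (t, 0)))
        (deriv (fun u : ℝ => h.toFun (u, 0)) t))
      = ∫ t in (0:ℝ)..1, TauAux.dot (TauAux.aOf g.toFun (t, 0))
        (deriv (fun u : ℝ => ((u : ℝ), (0:ℝ))) t) := by
    apply TauAux.homotopy_eq (TauAux.aOf g.toFun) Ug hUg hDUg
      (TauAux.aOf_contDiffOn hUg hsmg) hclg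
      (fun u : ℝ => ((u : ℝ), (0:ℝ))) (fun u : ℝ => h.toFun (u, 0)) Ih hIh hIccIh
      (hlinesm.contDiffOn) hchsm
    · intro s hs t ht
      exact TauAux.disk_convex (hγD t ht) (h.mapsTo (hγD t ht)) hs.1 hs.2
    · exact hh0
    · exact hhrel _ h10B
  have part1 : tau gh = tau g + tau h := by
    rw [e1, hhom1, ← TauAux.tau_eq g]
  refine ⟨part1, ?_⟩
  ------------------------------------------------------------------ Part 2
  have e2 := TauAux.tau_comp_eq h g hg' hUh hDUh hsmh hUg hDUg hsmg hcomp'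
  set q : ℝ × ℝ := g.toFun (1, 0) with hqdef
  have hqB : q ∈ Bdry := TauAux.bdry_of g
  have hqD : q ∈ Disk := le_of_eq (show q.1 ^ 2 + q.2 ^ 2 = 1 from hqB)
  obtain ⟨θ₀, hθ⟩ := TauAux.exists_angle hqB
  have hmsm : ContDiff ℝ (⊤ : ℕ∞) (fun u : ℝ => u • q) := contDiff_id.smul contDiff_const
  have hmD : ∀ t ∈ Set.Icc (0:ℝ) 1, (t • q) ∈ Disk := by
    intro t ht
    have hq1 : q.1 ^ 2 + q.2 ^ 2 ≤ 1 := hqD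
    show (t • q).1 ^ 2 + (t • q).2 ^ 2 ≤ 1
    have ea : (t • q).1 = t * q.1 := rfl
    have eb : (t • q).2 = t * q.2 := rfl
    rw [ea, eb]
    obtain ⟨ha, hb⟩ := ht
    have h3 : t ^ 2 ≤ 1 := by nlinarith
    have h4 : (t * q.1) ^ 2 + (t * q.2) ^ 2 = t ^ 2 * (q.1 ^ 2 + q.2 ^ 2) := by ring
    rw [h4]
    calc t ^ 2 * (q.1 ^ 2 + q.2 ^ 2) ≤ t ^ 2 * 1 :=
          mul_le_mul_of_nonneg_left hq1 (sq_nonneg t)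
      _ ≤ 1 := by nlinarith
  -- Step A :  ∫ along g∘γ  =  ∫ along radial segment to q
  have stepA : (∫ t in (0:ℝ)..1, TauAux.dot (TauAux.aOf h.toFun (g.toFun (t, 0)))
        (deriv (fun u : ℝ => g.toFun (u, 0)) t))
      = ∫ t in (0:ℝ)..1, TauAux.dot (TauAux.aOf h.toFun (t • q))
        (deriv (fun u : ℝ => u • q) t) := by
    apply TauAux.homotopy_eq (TauAux.aOf h.toFun) Uh hUh hDUh
      (TauAux.aOf_contDiffOn hUh hsmh) hclh
      (fun u : ℝ => u • q) (fun u : ℝ => g.toFun (u, 0)) Ig hIg hIccIg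
      (hmsm.contDiffOn) hcgsm
    · intro s hs t ht
      exact TauAux.disk_convex (hmD t ht) (g.mapsTo (hγD t ht)) hs.1 hs.2
    · show g.toFun (0, 0) = (0:ℝ) • q
      rw [hg, zero_smul]
      rfl
    · show g.toFun (1, 0) = (1:ℝ) • q
      rw [one_smul]
  -- Step B : radial segment vs γ, with chord boundary term
  have stepB := TauAux.homotopy_integral (TauAux.aOf h.toFun) Uh hUh hDUh
      (TauAux.aOf_contDiffOn hUh hsmh) hclh
      (fun u : ℝ => ((u : ℝ), (0:ℝ))) (fun u : ℝ => u • q) Set.univ isOpen_univ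
      (Set.subset_univ _) hlinesm.contDiffOn hmsm.contDiffOn
      (by
        intro s hs t ht
        exact TauAux.disk_convex (hγD t ht) (hmD t ht) hs.1 hs.2)
  simp only [one_smul, zero_smul, Prod.mk_zero_zero, sub_zero, sub_self, smul_zero,
    add_zero, zero_add, TauAux.dot_zero, intervalIntegral.integral_zero] at stepB
  -- Step C : chord vs arc
  have hArcD : ∀ u : ℝ, (Real.cos (u * θ₀), Real.sin (u * θ₀)) ∈ Disk :=
    fun u => le_of_eq (Real.cos_sq_add_sin_sq _)
  have hArcsm : ContDiff ℝ (⊤ : ℕ∞) (fun u : ℝ => (Real.cos (u * θ₀), Real.sin (u * θ₀))) := by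
    apply ContDiff.prodMk
    · exact Real.contDiff_cos.comp (contDiff_id.mul contDiff_const)
    · exact Real.contDiff_sin.comp (contDiff_id.mul contDiff_const)
  have hLsm : ContDiff ℝ (⊤ : ℕ∞)
      (fun s : ℝ => ((1:ℝ), (0:ℝ)) + s • (q - ((1:ℝ), (0:ℝ)))) :=
    contDiff_const.add (contDiff_id.smul contDiff_const)
  have stepC : (∫ s in (0:ℝ)..1, TauAux.dot
        (TauAux.aOf h.toFun (((1:ℝ), (0:ℝ)) + s • (q - ((1:ℝ), (0:ℝ)))))
        (deriv (fun y : ℝ => ((1:ℝ), (0:ℝ)) + y • (q - ((1:ℝ), (0:ℝ)))) s))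
      = ∫ u in (0:ℝ)..1, TauAux.dot
        (TauAux.aOf h.toFun (Real.cos (u * θ₀), Real.sin (u * θ₀)))
        (deriv (fun x : ℝ => (Real.cos (x * θ₀), Real.sin (x * θ₀))) u) := by
    apply TauAux.homotopy_eq (TauAux.aOf h.toFun) Uh hUh hDUh
      (TauAux.aOf_contDiffOn hUh hsmh) hclh
      (fun u : ℝ => (Real.cos (u * θ₀), Real.sin (u * θ₀)))
      (fun y : ℝ => ((1:ℝ), (0:ℝ)) + y • (q - ((1:ℝ), (0:ℝ))))
      Set.univ isOpen_univ (Set.subset_univ _) hArcsm.contDiffOn hLsm.contDiffOn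
    · intro s hs t ht
      exact TauAux.disk_convex (hArcD t) (TauAux.disk_convex h10D hqD ht.1 ht.2) hs.1 hs.2
    · show ((1:ℝ), (0:ℝ)) + (0:ℝ) • (q - ((1:ℝ), (0:ℝ)))
        = (Real.cos ((0:ℝ) * θ₀), Real.sin ((0:ℝ) * θ₀))
      simp
    · show ((1:ℝ), (0:ℝ)) + (1:ℝ) • (q - ((1:ℝ), (0:ℝ)))
        = (Real.cos ((1:ℝ) * θ₀), Real.sin ((1:ℝ) * θ₀))
      rw [one_smul, one_mul, ← hθ]
      abel
  -- identify the boundary term with the chord integral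
  have hderL : ∀ s : ℝ,
      deriv (fun y : ℝ => ((1:ℝ), (0:ℝ)) + y • (q - ((1:ℝ), (0:ℝ)))) s
        = q - ((1:ℝ), (0:ℝ)) := by
    intro s
    have hd := ((hasDerivAt_id s).smul_const (q - ((1:ℝ), (0:ℝ)))).const_add ((1:ℝ), (0:ℝ))
    rw [one_smul] at hd
    exact hd.deriv
  have hbnd : (∫ s in (0:ℝ)..1, TauAux.dot
        (TauAux.aOf h.toFun (((1:ℝ), (0:ℝ)) + s • (q - ((1:ℝ), (0:ℝ)))))
        (q - ((1:ℝ), (0:ℝ))))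
      = ∫ s in (0:ℝ)..1, TauAux.dot
        (TauAux.aOf h.toFun (((1:ℝ), (0:ℝ)) + s • (q - ((1:ℝ), (0:ℝ)))))
        (deriv (fun y : ℝ => ((1:ℝ), (0:ℝ)) + y • (q - ((1:ℝ), (0:ℝ)))) s) := by
    apply intervalIntegral.integral_congr
    intro s _
    simp only [hderL]
  -- Step D : the arc integral vanishes
  have stepD : (∫ u in (0:ℝ)..1, TauAux.dot
        (TauAux.aOf h.toFun (Real.cos (u * θ₀), Real.sin (u * θ₀)))
        (deriv (fun x : ℝ => (Real.cos (x * θ₀), Real.sin (x * θ₀))) u)) = 0 := by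
    have hzero : ∀ u : ℝ, TauAux.dot
        (TauAux.aOf h.toFun (Real.cos (u * θ₀), Real.sin (u * θ₀)))
        (deriv (fun x : ℝ => (Real.cos (x * θ₀), Real.sin (x * θ₀))) u) = 0 := by
      intro u
      have h1 : HasDerivAt (fun x : ℝ => Real.cos (x * θ₀)) (-Real.sin (u * θ₀) * θ₀) u := by
        have := (Real.hasDerivAt_cos (u * θ₀)).comp u (hasDerivAt_mul_const θ₀)
        simpa [Function.comp_def] using this
      have h2 : HasDerivAt (fun x : ℝ => Real.sin (x * θ₀)) (Real.cos (u * θ₀) * θ₀) u := by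
        have := (Real.hasDerivAt_sin (u * θ₀)).comp u (hasDerivAt_mul_const θ₀)
        simpa [Function.comp_def] using this
      rw [(h1.prodMk h2).deriv]
      have hlin : TauAux.dot (TauAux.aOf h.toFun (Real.cos (u * θ₀), Real.sin (u * θ₀)))
          (-Real.sin (u * θ₀) * θ₀, Real.cos (u * θ₀) * θ₀)
          = θ₀ * TauAux.dot (TauAux.aOf h.toFun (Real.cos (u * θ₀), Real.sin (u * θ₀)))
            (-Real.sin (u * θ₀), Real.cos (u * θ₀)) := by
        simp only [TauAux.dot]
        ring
      rw [hlin, TauAux.rel_dot_aOf h hhrel hUh hDUh hsmh (u * θ₀), mul_zero]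
    rw [intervalIntegral.integral_congr (g := fun _ : ℝ => (0:ℝ)) (fun u _ => hzero u)]
    simp
  -- assemble part 2
  have htauh := TauAux.tau_eq h
  rw [hbnd, stepC, stepD] at stepB
  rw [e2, stepA]
  linarith [stepB, htauh]
end
end
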